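/- Let G be a triconed graph with no coloops and let B be a spanning tree of G that does not contain the edge 01 but does contain the edge 02. Then B contains a path from 1 to 2 that does not use the edge 02 if and only if the vertices 1 and 2 are connected in the blueprint of φ1(B). -/

import Mathlib

attribute [-instance] Sym2.instPartialOrder

open scoped Classical

variable {V : Type} [Fintype V] [LinearOrder V] [LinearOrder (Sym2 V)]

/-- `T` is a spanning tree of the graph `G`, viewed as a set of edges. -/
def IsSpanningTree (G : SimpleGraph V) (T : Set (Sym2 V)) : Prop :=
  T ⊆ G.edgeSet ∧ (SimpleGraph.fromEdgeSet T).IsTree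

/-- An edge `e` of the spanning tree `T` is internally passive (w.r.t. the edge order). -/
def InternallyPassive (G : SimpleGraph V) (T : Set (Sym2 V)) (e : Sym2 V) : Prop :=
  e ∈ T ∧ ∃ f ∈ G.edgeSet, f ∉ T ∧ f < e ∧ IsSpanningTree G (insert f (T \ {e}))

/-- The passivity of a spanning tree: the number of internally passive edges. -/
noncomputable def passivity (G : SimpleGraph V) (T : Set (Sym2 V)) : ℕ :=
  {e : Sym2 V | InternallyPassive G T e}.ncard

/-- `A` is lexicographically smaller than `B` as (sorted lists of) sets of edges:
the minimum of the symmetric difference lies in `A`. -/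
def EdgeSetLexLt (A B : Set (Sym2 V)) : Prop :=
  ∃ e, e ∈ A ∧ e ∉ B ∧ ∀ f, (f ∈ A ∧ f ∉ B) ∨ (f ∈ B ∧ f ∉ A) → f ≠ e → e < f

/-- `B0` is the minimum spanning tree of `G`: the spanning tree whose sorted edge
list is lexicographically smallest. -/
def IsMinSpanningTree (G : SimpleGraph V) (B0 : Set (Sym2 V)) : Prop :=
  IsSpanningTree G B0 ∧ ∀ T, IsSpanningTree G T → T ≠ B0 → EdgeSetLexLt B0 T

/-- `G` has no coloops: every edge lies outside some spanning tree. -/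
def NoColoops (G : SimpleGraph V) : Prop :=
  ∀ e ∈ G.edgeSet, ∃ T, IsSpanningTree G T ∧ e ∉ T

/-- `G` is a triconed graph with distinguished path `v1 - v0 - v2`. -/
def IsTriconed (G : SimpleGraph V) (v0 v1 v2 : V) : Prop :=
  G.Connected ∧ v0 ≠ v1 ∧ v0 ≠ v2 ∧ v1 ≠ v2 ∧ G.Adj v0 v1 ∧ G.Adj v0 v2 ∧
    ∀ v, v ≠ v0 → v ≠ v1 → v ≠ v2 → G.Adj v0 v ∨ G.Adj v1 v ∨ G.Adj v2 v

/-- The vertex order puts `v0 < v1 < v2` first, then the remaining neighbors of `v0`,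
then the remaining vertices adjacent to `v1`, then the rest. -/
def VertexOrderSpec (G : SimpleGraph V) (v0 v1 v2 : V) : Prop :=
  v0 < v1 ∧ v1 < v2 ∧
  (∀ v, v ≠ v0 → v ≠ v1 → v ≠ v2 → v2 < v) ∧
  (∀ u u', u ≠ v0 → u ≠ v1 → u ≠ v2 → u' ≠ v0 → u' ≠ v1 → u' ≠ v2 →
    G.Adj v0 u → ¬G.Adj v0 u' → u < u') ∧
  (∀ u u', u ≠ v0 → u ≠ v1 → u ≠ v2 → u' ≠ v0 → u' ≠ v1 → u' ≠ v2 →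
    ¬G.Adj v0 u → ¬G.Adj v0 u' → G.Adj v1 u → ¬G.Adj v1 u' → u < u')

/-- Smaller endpoint of an edge. -/
def sym2Min (e : Sym2 V) : V :=
  Sym2.lift ⟨fun a b => min a b, fun a b => min_comm a b⟩ e

/-- Larger endpoint of an edge. -/
def sym2Max (e : Sym2 V) : V :=
  Sym2.lift ⟨fun a b => max a b, fun a b => max_comm a b⟩ e

/-- Lexicographic comparison of edges by their endpoints. -/
def Sym2Lex (e f : Sym2 V) : Prop :=
  sym2Min e < sym2Min f ∨ (sym2Min e = sym2Min f ∧ sym2Max e < sym2Max f)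

/-- The block of an edge in the specified edge ordering: edges at `v0` first, then edges
joining `v1` to height-2 vertices, then edges joining `v2` to height-2 vertices not
adjacent to `v1`, then the remaining edges. -/
noncomputable def edgeBlock (G : SimpleGraph V) (v0 v1 v2 : V) (e : Sym2 V) : ℕ :=
  if v0 ∈ e then 0
  else if ∃ x, e = s(v1, x) ∧ ¬G.Adj v0 x then 1
  else if ∃ x, e = s(v2, x) ∧ ¬G.Adj v0 x ∧ ¬G.Adj v1 x then 2
  else 3

/-- The edge order respects the blocks, and is lexicographic within the first three blocks. -/
def EdgeOrderSpec (G : SimpleGraph V) (v0 v1 v2 : V) : Prop :=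
  (∀ e ∈ G.edgeSet, ∀ f ∈ G.edgeSet,
      edgeBlock G v0 v1 v2 e < edgeBlock G v0 v1 v2 f → e < f) ∧
  (∀ e ∈ G.edgeSet, ∀ f ∈ G.edgeSet,
      edgeBlock G v0 v1 v2 e = edgeBlock G v0 v1 v2 f → edgeBlock G v0 v1 v2 e ≤ 2 →
      Sym2Lex e f → e < f)

/-- The edges of `G_red`: edges of `G` not in `B0` and not incident to `v0`. -/
def GredEdges (G : SimpleGraph V) (v0 : V) (B0 : Set (Sym2 V)) : Set (Sym2 V) :=
  {e | e ∈ G.edgeSet ∧ e ∉ B0 ∧ v0 ∉ e}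

/-- `u` is a child of `p` in the spanning tree `B0` rooted at `v0`:
`s(u,p) ∈ B0` and removing this edge disconnects `u` from the root. -/
def IsChildOf (B0 : Set (Sym2 V)) (v0 : V) (u p : V) : Prop :=
  s(u, p) ∈ B0 ∧ ¬(SimpleGraph.fromEdgeSet (B0 \ {s(u, p)})).Reachable u v0

/-- The type of a vertex: `1` if it is `v1` or a child of `v1`, `2` if it is `v2` or a
child of `v2`, and `0` otherwise. -/
noncomputable def vType (B0 : Set (Sym2 V)) (v0 v1 v2 : V) (u : V) : ℕ :=
  if u = v1 ∨ IsChildOf B0 v0 u v1 then 1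
  else if u = v2 ∨ IsChildOf B0 v0 u v2 then 2
  else 0

/-- The height of a vertex other than `v0`: `1` if adjacent to `v0`, `2` otherwise. -/
noncomputable def vHeight (G : SimpleGraph V) (v0 : V) (u : V) : ℕ :=
  if G.Adj v0 u then 1 else 2

/-- `(E, m)` is a marked spanning forest of `G_red`: an acyclic set of `G_red`-edges
with marks on vertices, each vertex carrying at most one mark except type-2 vertices
which may carry two. -/
def IsMarkedForest (G : SimpleGraph V) (v0 v1 v2 : V) (B0 : Set (Sym2 V))
    (E : Set (Sym2 V)) (m : V → ℕ) : Prop :=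
  E ⊆ GredEdges G v0 B0 ∧ (SimpleGraph.fromEdgeSet E).IsAcyclic ∧ m v0 = 0 ∧
  ∀ v, m v ≤ if vType B0 v0 v1 v2 v = 2 then 2 else 1

/-- Total number of marks in the component of `u`. -/
noncomputable def compMarks (E : Set (Sym2 V)) (m : V → ℕ) (u : V) : ℕ :=
  ∑ x : V, if (SimpleGraph.fromEdgeSet E).Reachable u x then m x else 0

/-- Number of marks of type `t` in the component of `u` (the extra mark of a doubly
marked vertex counting as a mark of type `0`). -/
noncomputable def markTypeCount (B0 : Set (Sym2 V)) (v0 v1 v2 : V)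
    (E : Set (Sym2 V)) (m : V → ℕ) (u : V) (t : ℕ) : ℕ :=
  ∑ x : V, if (SimpleGraph.fromEdgeSet E).Reachable u x then
      ((if 1 ≤ m x ∧ vType B0 v0 v1 v2 x = t then 1 else 0) +
        (if m x = 2 ∧ t = 0 then 1 else 0))
    else 0

/-- The component of `u` in `(E, m)` is correctly marked. -/
def CorrectlyMarkedComp (B0 : Set (Sym2 V)) (v0 v1 v2 : V)
    (E : Set (Sym2 V)) (m : V → ℕ) (u : V) : Prop :=
  1 ≤ compMarks E m u ∧
  ((SimpleGraph.fromEdgeSet E).Reachable u v1 → 1 ≤ m v1) ∧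
  ((SimpleGraph.fromEdgeSet E).Reachable u v2 → 1 ≤ m v2) ∧
  (∀ t, markTypeCount B0 v0 v1 v2 E m u t ≤ 1) ∧
  (∀ x, (SimpleGraph.fromEdgeSet E).Reachable u x → m x = 2 →
    ∃ x', (SimpleGraph.fromEdgeSet E).Reachable u x' ∧ x' ≠ x ∧ 1 ≤ m x')

/-- The multiplicity of the blueprint edge `{a, b}`: the number of 2-components whose
marks have types `a` and `b`, plus (for `{a,b} ∈ {{0,1},{0,2}}`) the number of
3-components. -/
noncomputable def bpMult (B0 : Set (Sym2 V)) (v0 v1 v2 : V)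
    (E : Set (Sym2 V)) (m : V → ℕ) (a b : ℕ) : ℕ :=
  {c : (SimpleGraph.fromEdgeSet E).ConnectedComponent |
    ∃ u, u ≠ v0 ∧ (SimpleGraph.fromEdgeSet E).connectedComponentMk u = c ∧
      ((compMarks E m u = 2 ∧ a ≠ b ∧
          1 ≤ markTypeCount B0 v0 v1 v2 E m u a ∧ 1 ≤ markTypeCount B0 v0 v1 v2 E m u b) ∨
        (compMarks E m u = 3 ∧
          (({a, b} : Set ℕ) = {0, 1} ∨ ({a, b} : Set ℕ) = {0, 2})))}.ncard

/-- The blueprint (a multigraph on `{0,1,2}`) is acyclic. -/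
def bpAcyclic (B0 : Set (Sym2 V)) (v0 v1 v2 : V) (E : Set (Sym2 V)) (m : V → ℕ) : Prop :=
  bpMult B0 v0 v1 v2 E m 0 1 ≤ 1 ∧ bpMult B0 v0 v1 v2 E m 0 2 ≤ 1 ∧
  bpMult B0 v0 v1 v2 E m 1 2 ≤ 1 ∧
  ¬(1 ≤ bpMult B0 v0 v1 v2 E m 0 1 ∧ 1 ≤ bpMult B0 v0 v1 v2 E m 0 2 ∧
      1 ≤ bpMult B0 v0 v1 v2 E m 1 2)

/-- The vertices `a` and `b` of the blueprint lie in the same connected component. -/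
def bpConnected (B0 : Set (Sym2 V)) (v0 v1 v2 : V) (E : Set (Sym2 V)) (m : V → ℕ)
    (a b : ℕ) : Prop :=
  a = b ∨ 1 ≤ bpMult B0 v0 v1 v2 E m a b ∨
    ∃ c, c ∈ ({0, 1, 2} : Set ℕ) ∧ c ≠ a ∧ c ≠ b ∧
      1 ≤ bpMult B0 v0 v1 v2 E m a c ∧ 1 ≤ bpMult B0 v0 v1 v2 E m c b

/-- `(E, m)` is a trirooted forest of `G_red`. -/
def IsTriRootedForest (G : SimpleGraph V) (v0 v1 v2 : V) (B0 : Set (Sym2 V))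
    (E : Set (Sym2 V)) (m : V → ℕ) : Prop :=
  IsMarkedForest G v0 v1 v2 B0 E m ∧
  (∀ u, u ≠ v0 → CorrectlyMarkedComp B0 v0 v1 v2 E m u) ∧
  bpAcyclic B0 v0 v1 v2 E m

/-- `v` receives the extra mark coming from the edge `02`: `02 ∈ B`, there is a path
from `v2` to `v1` in `B` avoiding `02`, and `v` is the endpoint closer to `v2` of the
first edge of this path not in `B0`. -/
def DoublyMarkedAt (B0 B : Set (Sym2 V)) (v0 v1 v2 : V) (v : V) : Prop :=
  s(v0, v2) ∈ B ∧
  ∃ p : (SimpleGraph.fromEdgeSet B).Walk v2 v1, p.IsPath ∧ s(v0, v2) ∉ p.edges ∧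
    ∃ i : ℕ, (∀ j < i, ∀ e, p.edges[j]? = some e → e ∈ B0) ∧
      (∃ e, p.edges[i]? = some e ∧ e ∉ B0) ∧ v = p.getVert i

/-- `(E, m)` is the marked spanning forest `φ₁(B)` associated to the spanning tree `B`. -/
def IsPhi1 (G : SimpleGraph V) (v0 v1 v2 : V) (B0 B : Set (Sym2 V))
    (E : Set (Sym2 V)) (m : V → ℕ) : Prop :=
  E = B ∩ GredEdges G v0 B0 ∧
  (∀ v, m v ≤ 2) ∧
  (∀ v, 1 ≤ m v ↔ (v = v1 ∨ v = v2 ∨ ∃ p, IsChildOf B0 v0 v p ∧ s(v, p) ∈ B)) ∧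
  (∀ v, m v = 2 ↔ DoublyMarkedAt B0 B v0 v1 v2 v)

/-- `(S, E)` is a (sub)tree of `G_red` with vertex set `S` and edge set `E`. -/
def IsSubTree (G : SimpleGraph V) (v0 : V) (B0 : Set (Sym2 V))
    (S : Set V) (E : Set (Sym2 V)) : Prop :=
  S.Nonempty ∧ v0 ∉ S ∧ E ⊆ GredEdges G v0 B0 ∧
  (∀ e ∈ E, ∀ x ∈ e, x ∈ S) ∧
  (∀ u ∈ S, ∀ x ∈ S, (SimpleGraph.fromEdgeSet E).Reachable u x) ∧
  (SimpleGraph.fromEdgeSet E).IsAcyclic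

/-- Total number of marks of the marked tree `(S, m)`. -/
noncomputable def treeTotalMarks (S : Set V) (m : V → ℕ) : ℕ :=
  ∑ x : V, if x ∈ S then m x else 0

/-- Number of marks of type `t` of the marked tree `(S, m)`. -/
noncomputable def treeMarkTypeCount (B0 : Set (Sym2 V)) (v0 v1 v2 : V)
    (S : Set V) (m : V → ℕ) (t : ℕ) : ℕ :=
  ∑ x : V, if x ∈ S then
      ((if 1 ≤ m x ∧ vType B0 v0 v1 v2 x = t then 1 else 0) +
        (if m x = 2 ∧ t = 0 then 1 else 0))
    else 0

/-- `(S, E, m)` is a correctly marked tree of `G_red`. -/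
def IsCorrectlyMarkedTree (G : SimpleGraph V) (v0 v1 v2 : V) (B0 : Set (Sym2 V))
    (S : Set V) (E : Set (Sym2 V)) (m : V → ℕ) : Prop :=
  IsSubTree G v0 B0 S E ∧
  (∀ v, v ∉ S → m v = 0) ∧
  (∀ v, m v ≤ if vType B0 v0 v1 v2 v = 2 then 2 else 1) ∧
  1 ≤ treeTotalMarks S m ∧
  (v1 ∈ S → 1 ≤ m v1) ∧ (v2 ∈ S → 1 ≤ m v2) ∧
  (∀ t, treeMarkTypeCount B0 v0 v1 v2 S m t ≤ 1) ∧
  (∀ x ∈ S, m x = 2 → ∃ x' ∈ S, x' ≠ x ∧ 1 ≤ m x')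

/-- Number of effective marks: marks at normal vertices together with the extra marks
of doubly marked vertices. -/
noncomputable def effMarks (v1 v2 : V) (S : Set V) (m : V → ℕ) : ℕ :=
  treeTotalMarks S m -
    ((if v1 ∈ S ∧ 1 ≤ m v1 then 1 else 0) + (if v2 ∈ S ∧ 1 ≤ m v2 then 1 else 0))

/-- Number of passive effective marks: an effective mark is passive unless it is the
unique mark of the tree and lies at the smallest vertex of the tree. -/
noncomputable def passiveEffMarks (v1 v2 : V) (S : Set V) (m : V → ℕ) : ℕ :=
  effMarks v1 v2 S m -
    (if ∃ v ∈ S, v ≠ v1 ∧ v ≠ v2 ∧ 1 ≤ m v ∧ treeTotalMarks S m = 1 ∧ ∀ u ∈ S, v ≤ u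
      then 1 else 0)

/-- Total excess `Σ_{e ∈ E} (w e - 1)` of the edge weights. -/
noncomputable def excessWeightSum (E : Set (Sym2 V)) (w : Sym2 V → ℕ) : ℕ :=
  ∑ e : Sym2 V, if e ∈ E then w e - 1 else 0

/-- Excess weight of the weighted tree `(S, E, w)`. -/
noncomputable def excessWeight (v1 v2 : V) (S : Set V) (E : Set (Sym2 V))
    (w : Sym2 V → ℕ) : ℕ :=
  (if v1 ∈ S then 1 else 0) + (if v2 ∈ S then 1 else 0) + excessWeightSum E w

/-- Total weight `Σ_{e ∈ E} w e`, i.e. the total degree of the associated monomial. -/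
noncomputable def totalWeight (E : Set (Sym2 V)) (w : Sym2 V → ℕ) : ℕ :=
  ∑ e : Sym2 V, if e ∈ E then w e else 0

/-- All pairs of weighted objects of the weighted tree `(S, E, w)` are compatible:
the endpoints of the smallest path containing any two weighted objects have
different types. -/
def WeightedObjectsCompatible (B0 : Set (Sym2 V)) (v0 v1 v2 : V)
    (S : Set V) (E : Set (Sym2 V)) (w : Sym2 V → ℕ) : Prop :=
  (∀ vsp ∈ ({v1, v2} : Set V), vsp ∈ S → ∀ x y, s(x, y) ∈ E → 2 ≤ w s(x, y) →
      (SimpleGraph.fromEdgeSet (E \ {s(x, y)})).Reachable vsp x →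
      vType B0 v0 v1 v2 vsp ≠ vType B0 v0 v1 v2 y) ∧
  (∀ x y p q, s(x, y) ∈ E → s(p, q) ∈ E → s(x, y) ≠ s(p, q) →
      2 ≤ w s(x, y) → 2 ≤ w s(p, q) →
      (SimpleGraph.fromEdgeSet (E \ {s(x, y)})).Reachable x p →
      (SimpleGraph.fromEdgeSet (E \ {s(p, q)})).Reachable p x →
      vType B0 v0 v1 v2 y ≠ vType B0 v0 v1 v2 q) ∧
  (∀ x y, s(x, y) ∈ E → 3 ≤ w s(x, y) → vType B0 v0 v1 v2 x ≠ vType B0 v0 v1 v2 y)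

/-- `(S, E, w)` is a correctly weighted tree of `G_red`. -/
def IsCorrectlyWeightedTree (G : SimpleGraph V) (v0 v1 v2 : V) (B0 : Set (Sym2 V))
    (S : Set V) (E : Set (Sym2 V)) (w : Sym2 V → ℕ) : Prop :=
  IsSubTree G v0 B0 S E ∧
  (∀ e ∈ E, 1 ≤ w e) ∧
  excessWeight v1 v2 S E w ≤ 3 ∧
  (2 ≤ excessWeight v1 v2 S E w → WeightedObjectsCompatible B0 v0 v1 v2 S E w) ∧
  (∀ x y, s(x, y) ∈ E → w s(x, y) ≤ vHeight G v0 x + vHeight G v0 y) ∧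
  (∀ x y, s(x, y) ∈ E → w s(x, y) = vHeight G v0 x + vHeight G v0 y →
    ∀ e ∈ E, e ≠ s(x, y) → w e ≤ 2)

/-- `s(v, x)` is the edge incident to `v` on the unique path from `v` to `u` in the
tree with edge set `E`. -/
def PathFirstEdge (E : Set (Sym2 V)) (v u : V) (x : V) : Prop :=
  s(v, x) ∈ E ∧ ¬(SimpleGraph.fromEdgeSet (E \ {s(v, x)})).Reachable v u

/-- `z` lies on the (unique) path between `a` and `b` in the forest with edge set `E`. -/
def OnPathBetween (E : Set (Sym2 V)) (a b z : V) : Prop :=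
  ∃ p : (SimpleGraph.fromEdgeSet E).Walk a b, p.IsPath ∧ z ∈ p.support

/-- `s(x, y)` (with `x` nearer `z`, `y` nearer `v`) is the first edge along the path
from the sandwiched mark `z` towards `v` whose endpoint closer to `v` has type
different from that of `wv` and whose endpoint closer to `wv` has type different
from that of `v`. -/
def SandwichEdge (B0 : Set (Sym2 V)) (v0 v1 v2 : V) (E : Set (Sym2 V))
    (z v wv : V) (x y : V) : Prop :=
  s(x, y) ∈ E ∧
  ¬(SimpleGraph.fromEdgeSet (E \ {s(x, y)})).Reachable z v ∧
  (SimpleGraph.fromEdgeSet (E \ {s(x, y)})).Reachable z x ∧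
  vType B0 v0 v1 v2 y ≠ vType B0 v0 v1 v2 wv ∧
  vType B0 v0 v1 v2 x ≠ vType B0 v0 v1 v2 v ∧
  ∀ x' y', s(x', y') ∈ E →
    ¬(SimpleGraph.fromEdgeSet (E \ {s(x', y')})).Reachable z x →
    (SimpleGraph.fromEdgeSet (E \ {s(x', y')})).Reachable z x' →
    (vType B0 v0 v1 v2 y' = vType B0 v0 v1 v2 wv ∨ vType B0 v0 v1 v2 x' = vType B0 v0 v1 v2 v)

/-- `w` is the weighting `φ₂(S, E, m)` produced by the empowerment algorithm applied
to the correctly marked tree `(S, E, m)` (only the weights of edges of `E` are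
constrained). -/
def IsPhi2 (B0 : Set (Sym2 V)) (v0 v1 v2 : V)
    (S : Set V) (E : Set (Sym2 V)) (m : V → ℕ) (w : Sym2 V → ℕ) : Prop :=
  (treeTotalMarks S m = 1 →
    ∃ v ∈ S, m v = 1 ∧
      (((∀ u ∈ S, v ≤ u) ∧ ∀ e ∈ E, w e = 1) ∨
        (¬(∀ u ∈ S, v ≤ u) ∧ ∃ u0 ∈ S, (∀ u ∈ S, u0 ≤ u) ∧
          ∃ x, PathFirstEdge E v u0 x ∧ ∀ e ∈ E, w e = if e = s(v, x) then 2 else 1))) ∧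
  (treeTotalMarks S m = 2 →
    ∃ v ∈ S, ∃ u ∈ S, v ≠ u ∧ m v = 1 ∧ m u = 1 ∧
      ∃ x y, PathFirstEdge E v u x ∧ PathFirstEdge E u v y ∧
        ∀ e ∈ E, w e = 1 + (if v ≠ v1 ∧ v ≠ v2 ∧ e = s(v, x) then 1 else 0)
                        + (if u ≠ v1 ∧ u ≠ v2 ∧ e = s(u, y) then 1 else 0)) ∧
  (treeTotalMarks S m = 3 →
    ((∃ a ∈ S, ∃ b ∈ S, ∃ c ∈ S, a ≠ b ∧ a ≠ c ∧ b ≠ c ∧ m a = 1 ∧ m b = 1 ∧ m c = 1 ∧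
        ¬OnPathBetween E b c a ∧ ¬OnPathBetween E a c b ∧ ¬OnPathBetween E a b c ∧
        ∃ xa xb xc, PathFirstEdge E a b xa ∧ PathFirstEdge E b a xb ∧
          PathFirstEdge E c a xc ∧
          ∀ e ∈ E, w e = 1 + (if a ≠ v1 ∧ a ≠ v2 ∧ e = s(a, xa) then 1 else 0)
                          + (if b ≠ v1 ∧ b ≠ v2 ∧ e = s(b, xb) then 1 else 0)
                          + (if c ≠ v1 ∧ c ≠ v2 ∧ e = s(c, xc) then 1 else 0)) ∨
      (∃ v ∈ S, ∃ wv ∈ S, ∃ z ∈ S, v ≠ wv ∧ v ≠ z ∧ 1 ≤ m v ∧ 1 ≤ m wv ∧ 1 ≤ m z ∧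
        OnPathBetween E v wv z ∧ (z = wv → m wv = 2) ∧
        (z ≠ wv → m v = 1 ∧ m wv = 1 ∧ m z = 1) ∧
        vType B0 v0 v1 v2 v < vType B0 v0 v1 v2 wv ∧
        ∃ xv xw xz yz, PathFirstEdge E v wv xv ∧ PathFirstEdge E wv v xw ∧
          SandwichEdge B0 v0 v1 v2 E z v wv xz yz ∧
          ∀ e ∈ E, w e = 1 + (if v ≠ v1 ∧ v ≠ v2 ∧ e = s(v, xv) then 1 else 0)
                          + (if wv ≠ v1 ∧ wv ≠ v2 ∧ e = s(wv, xw) then 1 else 0)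
                          + (if e = s(xz, yz) then 1 else 0))))

/-- The vertex set of the component of `u` in the forest with edge set `E`. -/
def compVerts (E : Set (Sym2 V)) (u : V) : Set V :=
  {x | (SimpleGraph.fromEdgeSet E).Reachable u x}

/-- The edge set of the component of `u` in the forest with edge set `E`. -/
def compEdges (E : Set (Sym2 V)) (u : V) : Set (Sym2 V) :=
  {e | e ∈ E ∧ ∀ x ∈ e, (SimpleGraph.fromEdgeSet E).Reachable u x}

/-- `w` is the weighting `φ₂(E, m)` of the marked forest `(E, m)`, obtained by applying
the empowerment algorithm to every component. -/
def IsPhi2Forest (B0 : Set (Sym2 V)) (v0 v1 v2 : V)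
    (E : Set (Sym2 V)) (m : V → ℕ) (w : Sym2 V → ℕ) : Prop :=
  ∀ u, u ≠ v0 → IsPhi2 B0 v0 v1 v2 (compVerts E u) (compEdges E u)
      (fun v => if v ∈ compVerts E u then m v else 0) w

/-- `(h_0, …, h_r)` is a pure O-sequence. -/
def IsPureOSeq (r : ℕ) (h : ℕ → ℕ) : Prop :=
  ∃ (σ : Type) (_ : Finite σ) (X : Set (σ →₀ ℕ)),
    X.Finite ∧
    (∀ μ ∈ X, ∀ ν : σ →₀ ℕ, ν ≤ μ → ν ∈ X) ∧
    (∀ μ ∈ X, ∀ ν ∈ X, (∀ ρ ∈ X, μ ≤ ρ → ρ = μ) → (∀ ρ ∈ X, ν ≤ ρ → ρ = ν) →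
        μ.sum (fun _ n => n) = ν.sum (fun _ n => n)) ∧
    (∀ i, {μ ∈ X | μ.sum (fun _ n => n) = i}.ncard = if i ≤ r then h i else 0)

set_option linter.unusedSectionVars false
set_option maxHeartbeats 1000000

open SimpleGraph

namespace Stmt9Aux

variable {V : Type} [Fintype V] [LinearOrder V] [LinearOrder (Sym2 V)]

/-! ### Generic graph lemmas -/

lemma sdiff_fromEdgeSet (S : Set (Sym2 V)) (e : Sym2 V) :
    SimpleGraph.fromEdgeSet S \ SimpleGraph.fromEdgeSet {e} =
      SimpleGraph.fromEdgeSet (S \ {e}) := by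
  ext x y
  simp only [sdiff_adj, fromEdgeSet_adj, Set.mem_diff, Set.mem_singleton_iff, not_and,
    Set.mem_singleton_iff]
  tauto

lemma acyclic_mono {H K : SimpleGraph V} (h : H ≤ K) (hK : K.IsAcyclic) : H.IsAcyclic := by
  intro v c hc
  exact hK (c.mapLe h) (hc.mapLe h)

lemma not_reachable_deleteEdge {S : Set (Sym2 V)} (hac : (fromEdgeSet S).IsAcyclic)
    {a b : V} (hab : a ≠ b) (he : s(a, b) ∈ S) :
    ¬(fromEdgeSet (S \ {s(a, b)})).Reachable a b := by
  have hmem : s(a, b) ∈ (fromEdgeSet S).edgeSet := by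
    rw [edgeSet_fromEdgeSet]
    exact ⟨he, by simp [hab]⟩
  have hb := (isAcyclic_iff_forall_edge_isBridge.mp hac) hmem
  rw [isBridge_iff] at hb
  rw [← sdiff_fromEdgeSet]
  exact hb

lemma reachable_of_walk_avoid {H K : SimpleGraph V} {f : Sym2 V}
    (hK : ∀ x y, H.Adj x y → s(x, y) ≠ f → K.Adj x y)
    (hf : ∀ x y, H.Adj x y → s(x, y) = f → K.Reachable x y)
    {u w : V} (p : H.Walk u w) : K.Reachable u w := by
  induction p with
  | nil => exact Reachable.refl _
  | @cons x y w h p ih =>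
    refine Reachable.trans ?_ ih
    by_cases hef : s(x, y) = f
    · exact hf _ _ h hef
    · exact (hK _ _ h hef).reachable

lemma not_reachable_of_isolated {S : Set (Sym2 V)} {u x : V}
    (h : ∀ y, s(u, y) ∉ S) (hux : u ≠ x) : ¬(fromEdgeSet S).Reachable u x := by
  rintro ⟨p⟩
  cases p with
  | nil => exact hux rfl
  | cons h' _ =>
    rw [fromEdgeSet_adj] at h'
    exact h _ h'.1

lemma acyclic_insert {S : Set (Sym2 V)} (hac : (fromEdgeSet S).IsAcyclic) {a b : V}
    (hab : a ≠ b) (hnr : ¬(fromEdgeSet S).Reachable a b) :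
    (fromEdgeSet (insert s(a, b) S)).IsAcyclic := by
  have hbridge : (fromEdgeSet (insert s(a, b) S)).IsBridge s(a, b) := by
    rw [isBridge_iff]
    show ¬(fromEdgeSet (insert s(a, b) S) \ fromEdgeSet {s(a, b)}).Reachable a b
    rw [sdiff_fromEdgeSet]
    intro hr
    apply hnr
    refine hr.mono (fromEdgeSet_mono ?_)
    intro e he
    rcases he with ⟨he1, he2⟩
    rcases Set.mem_insert_iff.mp he1 with h | h
    · exact absurd h he2
    · exact h
  have hbridge := And.intro trivial ((isBridge_iff_forall_cycle_notMem ((SimpleGraph.mem_edgeSet _).mpr ((fromEdgeSet_adj _).mpr ⟨Set.mem_insert _ _, hab⟩))).mp hbridge)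
  intro v c hc
  have hce : s(a, b) ∉ c.edges := hbridge.2 _ hc
  have hsub : ∀ e ∈ c.edges, e ∈ (fromEdgeSet S).edgeSet := by
    intro e he
    have := c.edges_subset_edgeSet he
    rw [edgeSet_fromEdgeSet] at this ⊢
    rcases this with ⟨h1, h2⟩
    rcases Set.mem_insert_iff.mp h1 with h | h
    · exact absurd (h ▸ he) hce
    · exact ⟨h, h2⟩
  exact hac (c.transfer _ hsub) (hc.transfer hsub)

lemma edges_getElem?_eq {G : SimpleGraph V} :
    ∀ {u w : V} (p : G.Walk u w) (i : ℕ), i < p.length →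
      p.edges[i]? = some s(p.getVert i, p.getVert (i + 1)) := by
  intro u w p
  induction p with
  | nil => intro i hi; simp at hi
  | @cons a c w h p ih =>
    intro i hi
    cases i with
    | zero => simp [Walk.edges_cons, Walk.getVert_zero]
    | succ i =>
      have := ih i (by simpa using hi)
      simpa [Walk.edges_cons] using this

lemma wstep {S E' : Set (Sym2 V)} {e02 : Sym2 V} :
    ∀ {s t : V} (q : (fromEdgeSet S).Walk s t), e02 ∉ q.edges →
      ¬(fromEdgeSet E').Reachable s t →
      ∃ a b, (fromEdgeSet E').Reachable s a ∧ s(a, b) ∈ S ∧ a ≠ b ∧ s(a, b) ∉ E' ∧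
        s(a, b) ≠ e02 ∧ a ∈ q.support ∧ b ∈ q.support := by
  intro s t q
  induction q with
  | nil => intro _ hnr; exact absurd (Reachable.refl _) hnr
  | @cons s c t h q ih =>
    intro h02 hnr
    have hsc : s(s, c) ∈ S ∧ s ≠ c := (fromEdgeSet_adj _).mp h
    by_cases hE : s(s, c) ∈ E'
    · have hstep : (fromEdgeSet E').Reachable s c :=
        ((fromEdgeSet_adj _).mpr ⟨hE, hsc.2⟩).reachable
      have hnr' : ¬(fromEdgeSet E').Reachable c t := fun hr => hnr (hstep.trans hr)
      have h02' : e02 ∉ q.edges := fun hmem => h02 (by simp [Walk.edges_cons, hmem])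
      obtain ⟨a, b, hra, h1, h2, h3, h4, h5, h6⟩ := ih h02' hnr'
      exact ⟨a, b, hstep.trans hra, h1, h2, h3, h4,
        by simp [Walk.support_cons, h5], by simp [Walk.support_cons, h6]⟩
    · refine ⟨s, c, Reachable.refl _, hsc.1, hsc.2, hE, ?_, ?_, ?_⟩
      · intro heq
        apply h02
        rw [← heq]
        simp [Walk.edges_cons]
      · exact Walk.start_mem_support _
      · simp [Walk.support_cons]



/-! ### Exchange argument and the explicit minimum spanning tree -/

variable {G : SimpleGraph V} {v0 v1 v2 : V} {B0 B E : Set (Sym2 V)} {m : V → ℕ}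

lemma exch (hB0 : IsMinSpanningTree G B0) {a b : V} (he : s(a, b) ∈ G.edgeSet)
    (hne : s(a, b) ∉ B0) :
    ∃ y, s(b, y) ∈ B0 ∧ b ≠ y ∧ s(b, y) < s(a, b) := by
  obtain ⟨⟨hsub, htree⟩, hmin⟩ := hB0
  have hadj : G.Adj a b := (SimpleGraph.mem_edgeSet _).mp he
  have hab : a ≠ b := hadj.ne
  obtain ⟨p0⟩ := htree.isConnected.preconnected b a
  obtain ⟨w, hw⟩ := p0.toPath
  cases w with
  | nil => exact absurd rfl hab
  | @cons _ y _ hby q =>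
    have hf : s(b, y) ∈ B0 ∧ b ≠ y := (fromEdgeSet_adj _).mp hby
    have hfq : s(b, y) ∉ q.edges := by
      have hnd := hw.isTrail.edges_nodup
      rw [Walk.edges_cons] at hnd
      exact (List.nodup_cons.mp hnd).1
    have hfe : s(b, y) ≠ s(a, b) := fun h => hne (h ▸ hf.1)
    set T : Set (Sym2 V) := insert s(a, b) (B0 \ {s(b, y)}) with hT
    have htrans : ∀ g ∈ q.edges, g ∈ (fromEdgeSet (B0 \ {s(b, y)})).edgeSet := by
      intro g hg
      have hgB0 := q.edges_subset_edgeSet hg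
      rw [edgeSet_fromEdgeSet] at hgB0 ⊢
      exact ⟨⟨hgB0.1, fun hgf => hfq (hgf ▸ hg)⟩, hgB0.2⟩
    have hreach_ya : ∀ (X : Set (Sym2 V)), B0 \ {s(b, y)} ⊆ X →
        (fromEdgeSet X).Reachable y a := by
      intro X hX
      refine Walk.reachable ((q.transfer _ htrans).mapLe (fromEdgeSet_mono hX))
    have hreach_by : (fromEdgeSet T).Reachable b y := by
      have h1 : (fromEdgeSet T).Reachable a b :=
        ((fromEdgeSet_adj _).mpr ⟨Set.mem_insert _ _, hab⟩).reachable
      have h2 : (fromEdgeSet T).Reachable y a :=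
        hreach_ya T (Set.subset_insert _ _)
      exact (h1.symm.trans h2.symm).symm.symm
    have hconn : (fromEdgeSet T).Connected := by
      have : Nonempty V := ⟨b⟩
      refine ⟨fun x z => ?_⟩
      obtain ⟨r⟩ := htree.isConnected.preconnected x z
      refine reachable_of_walk_avoid (f := s(b, y)) ?_ ?_ r
      · intro x' y' hxy hne'
        rw [fromEdgeSet_adj] at hxy ⊢
        exact ⟨Set.mem_insert_of_mem _ ⟨hxy.1, hne'⟩, hxy.2⟩
      · intro x' y' hxy heq
        rw [Sym2.eq_iff] at heq
        rcases heq with ⟨rfl, rfl⟩ | ⟨rfl, rfl⟩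
        · exact hreach_by
        · exact hreach_by.symm
    have hacy : (fromEdgeSet T).IsAcyclic := by
      have hS : (fromEdgeSet (B0 \ {s(b, y)})).IsAcyclic :=
        acyclic_mono (fromEdgeSet_mono Set.diff_subset) htree.IsAcyclic
      have hnr : ¬(fromEdgeSet (B0 \ {s(b, y)})).Reachable a b := by
        intro hr
        apply not_reachable_deleteEdge htree.IsAcyclic hf.2 hf.1
        exact hr.symm.trans (hreach_ya _ (le_refl _)).symm
      exact acyclic_insert hS hab hnr
    have hTspan : IsSpanningTree G T := by
      constructor
      · intro g hg
        rcases Set.mem_insert_iff.mp hg with rfl | hg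
        · exact he
        · exact hsub hg.1
      · exact ⟨hconn, hacy⟩
    have hTne : T ≠ B0 := fun h => hne (h ▸ Set.mem_insert _ _)
    obtain ⟨g, hgA, hgB, hgmin⟩ := hmin T hTspan hTne
    have hgf : g = s(b, y) := by
      by_contra hgf
      exact hgB (Set.mem_insert_of_mem _ ⟨hgA, hgf⟩)
    subst hgf
    exact ⟨y, hf.1, hf.2,
      hgmin s(a, b) (Or.inr ⟨Set.mem_insert _ _, hne⟩) hfe.symm⟩

lemma edgeBlock_ge_one {e : Sym2 V} (h : v0 ∉ e) : 1 ≤ edgeBlock G v0 v1 v2 e := by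
  unfold edgeBlock
  rw [if_neg h]
  split_ifs <;> norm_num

lemma edgeBlock_eq_zero {e : Sym2 V} (h : v0 ∈ e) : edgeBlock G v0 v1 v2 e = 0 :=
  if_pos h

lemma edgeBlock_eq_one {e : Sym2 V} (h0 : v0 ∉ e)
    (h1 : ∃ x, e = s(v1, x) ∧ ¬G.Adj v0 x) : edgeBlock G v0 v1 v2 e = 1 := by
  unfold edgeBlock
  rw [if_neg h0, if_pos h1]

lemma edgeBlock_ge_two {e : Sym2 V} (h0 : v0 ∉ e)
    (h1 : ¬∃ x, e = s(v1, x) ∧ ¬G.Adj v0 x) : 2 ≤ edgeBlock G v0 v1 v2 e := by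
  unfold edgeBlock
  rw [if_neg h0, if_neg h1]
  split_ifs <;> norm_num

lemma edgeBlock_eq_two {e : Sym2 V} (h0 : v0 ∉ e)
    (h1 : ¬∃ x, e = s(v1, x) ∧ ¬G.Adj v0 x)
    (h2 : ∃ x, e = s(v2, x) ∧ ¬G.Adj v0 x ∧ ¬G.Adj v1 x) : edgeBlock G v0 v1 v2 e = 2 := by
  unfold edgeBlock
  rw [if_neg h0, if_neg h1, if_pos h2]

lemma edgeBlock_eq_three {e : Sym2 V} (h0 : v0 ∉ e)
    (h1 : ¬∃ x, e = s(v1, x) ∧ ¬G.Adj v0 x)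
    (h2 : ¬∃ x, e = s(v2, x) ∧ ¬G.Adj v0 x ∧ ¬G.Adj v1 x) : edgeBlock G v0 v1 v2 e = 3 := by
  unfold edgeBlock
  rw [if_neg h0, if_neg h1, if_neg h2]

lemma v0_edge_mem_B0 (hG : IsTriconed G v0 v1 v2) (heo : EdgeOrderSpec G v0 v1 v2)
    (hB0 : IsMinSpanningTree G B0) {x : V} (hadj : G.Adj v0 x) : s(v0, x) ∈ B0 := by
  by_contra hne
  obtain ⟨y, hfB0, hxy, hflt⟩ := exch hB0 ((SimpleGraph.mem_edgeSet _).mpr hadj) hne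
  have hfG : s(x, y) ∈ G.edgeSet := hB0.1.1 hfB0
  have hx0 : x ≠ v0 := hadj.ne'
  have hy0 : y ≠ v0 := by
    rintro rfl
    exact hne (Sym2.eq_swap ▸ hfB0)
  have hblt : edgeBlock G v0 v1 v2 s(v0, x) < edgeBlock G v0 v1 v2 s(x, y) := by
    rw [edgeBlock_eq_zero (by simp)]
    exact edgeBlock_ge_one (by simp [Sym2.mem_iff]; exact ⟨fun h => hx0 h.symm, fun h => hy0 h.symm⟩)
  exact absurd (heo.1 _ ((SimpleGraph.mem_edgeSet _).mpr hadj) _ hfG hblt) (lt_asymm hflt)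

lemma v1_child_mem_B0 (hG : IsTriconed G v0 v1 v2) (heo : EdgeOrderSpec G v0 v1 v2)
    (hB0 : IsMinSpanningTree G B0) {x : V} (hx0 : x ≠ v0) (hnadj0 : ¬G.Adj v0 x)
    (hadj1 : G.Adj v1 x) : s(v1, x) ∈ B0 := by
  by_contra hne
  obtain ⟨y, hfB0, hxy, hflt⟩ := exch hB0 ((SimpleGraph.mem_edgeSet _).mpr hadj1) hne
  have hfG : s(x, y) ∈ G.edgeSet := hB0.1.1 hfB0
  have hxv1 : x ≠ v1 := hadj1.ne'
  have hy0 : y ≠ v0 := by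
    rintro rfl
    exact hnadj0 ((SimpleGraph.mem_edgeSet _).mp hfG).symm
  have hyv1 : y ≠ v1 := by
    rintro rfl
    exact hne (Sym2.eq_swap ▸ hfB0)
  have hv0e : v0 ∉ s(x, y) := by
    simp only [Sym2.mem_iff]
    rintro (rfl | rfl)
    · exact hx0 rfl
    · exact hy0 rfl
  have hblt : edgeBlock G v0 v1 v2 s(v1, x) < edgeBlock G v0 v1 v2 s(x, y) := by
    rw [edgeBlock_eq_one (by
      simp only [Sym2.mem_iff]
      rintro (rfl | rfl)
      · exact hG.2.1 rfl
      · exact hx0 rfl) ⟨x, rfl, hnadj0⟩]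
    refine edgeBlock_ge_two hv0e ?_
    rintro ⟨z, hz, -⟩
    have hv1mem : v1 ∈ s(x, y) := hz ▸ (Sym2.mem_mk_left _ _)
    simp only [Sym2.mem_iff] at hv1mem
    rcases hv1mem with rfl | rfl
    · exact hxv1 rfl
    · exact hyv1 rfl
  exact absurd (heo.1 _ ((SimpleGraph.mem_edgeSet _).mpr hadj1) _ hfG hblt) (lt_asymm hflt)

lemma v2_child_mem_B0 (hG : IsTriconed G v0 v1 v2) (heo : EdgeOrderSpec G v0 v1 v2)
    (hB0 : IsMinSpanningTree G B0) {x : V} (hx0 : x ≠ v0) (hxv1 : x ≠ v1)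
    (hnadj0 : ¬G.Adj v0 x) (hnadj1 : ¬G.Adj v1 x)
    (hadj2 : G.Adj v2 x) : s(v2, x) ∈ B0 := by
  by_contra hne
  obtain ⟨y, hfB0, hxy, hflt⟩ := exch hB0 ((SimpleGraph.mem_edgeSet _).mpr hadj2) hne
  have hfG : s(x, y) ∈ G.edgeSet := hB0.1.1 hfB0
  have hxv2 : x ≠ v2 := hadj2.ne'
  have hy0 : y ≠ v0 := by
    rintro rfl
    exact hnadj0 ((SimpleGraph.mem_edgeSet _).mp hfG).symm
  have hyv1 : y ≠ v1 := by
    rintro rfl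
    exact hnadj1 ((SimpleGraph.mem_edgeSet _).mp hfG).symm
  have hyv2 : y ≠ v2 := by
    rintro rfl
    exact hne (Sym2.eq_swap ▸ hfB0)
  have hblt : edgeBlock G v0 v1 v2 s(v2, x) < edgeBlock G v0 v1 v2 s(x, y) := by
    rw [edgeBlock_eq_two (by
        simp only [Sym2.mem_iff]
        rintro (rfl | rfl)
        · exact hG.2.2.1 rfl
        · exact hx0 rfl)
      (by
        rintro ⟨z, hz, -⟩
        have hv1mem : v1 ∈ s(v2, x) := hz ▸ (Sym2.mem_mk_left _ _)
        simp only [Sym2.mem_iff] at hv1mem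
        rcases hv1mem with rfl | rfl
        · exact hG.2.2.2.1 rfl
        · exact hxv1 rfl)
      ⟨x, rfl, hnadj0, hnadj1⟩]
    rw [edgeBlock_eq_three (by
        simp only [Sym2.mem_iff]
        rintro (rfl | rfl)
        · exact hx0 rfl
        · exact hy0 rfl)
      (by
        rintro ⟨z, hz, -⟩
        have hv1mem : v1 ∈ s(x, y) := hz ▸ (Sym2.mem_mk_left _ _)
        simp only [Sym2.mem_iff] at hv1mem
        rcases hv1mem with rfl | rfl
        · exact hxv1 rfl
        · exact hyv1 rfl)
      (by
        rintro ⟨z, hz, -⟩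
        have hv2mem : v2 ∈ s(x, y) := hz ▸ (Sym2.mem_mk_left _ _)
        simp only [Sym2.mem_iff] at hv2mem
        rcases hv2mem with rfl | rfl
        · exact hxv2 rfl
        · exact hyv2 rfl)]
    norm_num
  exact absurd (heo.1 _ ((SimpleGraph.mem_edgeSet _).mpr hadj2) _ hfG hblt) (lt_asymm hflt)

/-- The explicit description of the edges of the minimum spanning tree. -/
def coneSet (G : SimpleGraph V) (v0 v1 v2 : V) : Set (Sym2 V) :=
  {e | e ∈ G.edgeSet ∧ (v0 ∈ e ∨ (∃ x, e = s(v1, x) ∧ ¬G.Adj v0 x) ∨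
    (∃ x, e = s(v2, x) ∧ ¬G.Adj v0 x ∧ ¬G.Adj v1 x))}

lemma coneSet_subset_B0 (hG : IsTriconed G v0 v1 v2) (heo : EdgeOrderSpec G v0 v1 v2)
    (hB0 : IsMinSpanningTree G B0) : coneSet G v0 v1 v2 ⊆ B0 := by
  rintro e ⟨heG, h⟩
  rcases h with h | ⟨x, rfl, hx⟩ | ⟨x, rfl, hx0, hx1⟩
  · obtain ⟨y, rfl⟩ := Sym2.mem_iff_exists.mp h
    exact v0_edge_mem_B0 hG heo hB0 ((SimpleGraph.mem_edgeSet _).mp heG)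
  · by_cases hxv0 : x = v0
    · rw [hxv0, Sym2.eq_swap]
      exact v0_edge_mem_B0 hG heo hB0 hG.2.2.2.2.1
    · exact v1_child_mem_B0 hG heo hB0 hxv0 hx ((SimpleGraph.mem_edgeSet _).mp heG)
  · by_cases hxv0 : x = v0
    · rw [hxv0, Sym2.eq_swap]
      exact v0_edge_mem_B0 hG heo hB0 hG.2.2.2.2.2.1
    · by_cases hxv1 : x = v1
      · subst hxv1
        exact absurd hG.2.2.2.2.1 hx0
      · exact v2_child_mem_B0 hG heo hB0 hxv0 hxv1 hx0 hx1 ((SimpleGraph.mem_edgeSet _).mp heG)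

/-! ### The explicit description of `B0` -/

lemma reach_v0_aux (hG : IsTriconed G v0 v1 v2) {X : Set (Sym2 V)}
    (hX : coneSet G v0 v1 v2 ⊆ X) (u : V) : (fromEdgeSet X).Reachable u v0 := by
  obtain ⟨hGc, h01, h02, h12, hadj01, hadj02, htri⟩ := hG
  have hstep : ∀ a b : V, G.Adj a b →
      (v0 ∈ s(a, b) ∨ (∃ x, s(a, b) = s(v1, x) ∧ ¬G.Adj v0 x) ∨
        (∃ x, s(a, b) = s(v2, x) ∧ ¬G.Adj v0 x ∧ ¬G.Adj v1 x)) →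
      (fromEdgeSet X).Adj a b := by
    intro a b hadj hpat
    exact (fromEdgeSet_adj _).mpr ⟨hX ⟨(SimpleGraph.mem_edgeSet _).mpr hadj, hpat⟩, hadj.ne⟩
  by_cases hu0 : u = v0
  · exact hu0 ▸ Reachable.refl _
  by_cases hadj0 : G.Adj v0 u
  · exact (hstep u v0 hadj0.symm (Or.inl (Sym2.mem_mk_right _ _))).reachable
  have huv1 : u ≠ v1 := fun h => hadj0 (h ▸ hadj01)
  have huv2 : u ≠ v2 := fun h => hadj0 (h ▸ hadj02)
  have hv1v0 : (fromEdgeSet X).Adj v1 v0 :=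
    hstep v1 v0 hadj01.symm (Or.inl (Sym2.mem_mk_right _ _))
  have hv2v0 : (fromEdgeSet X).Adj v2 v0 :=
    hstep v2 v0 hadj02.symm (Or.inl (Sym2.mem_mk_right _ _))
  rcases htri u hu0 huv1 huv2 with h | h | h
  · exact absurd h hadj0
  · have h1 : (fromEdgeSet X).Adj u v1 :=
      hstep u v1 h.symm (Or.inr (Or.inl ⟨u, Sym2.eq_swap, hadj0⟩))
    exact h1.reachable.trans hv1v0.reachable
  · by_cases hadj1 : G.Adj v1 u
    · have h1 : (fromEdgeSet X).Adj u v1 :=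
        hstep u v1 hadj1.symm (Or.inr (Or.inl ⟨u, Sym2.eq_swap, hadj0⟩))
      exact h1.reachable.trans hv1v0.reachable
    · have h1 : (fromEdgeSet X).Adj u v2 :=
        hstep u v2 h.symm (Or.inr (Or.inr ⟨u, Sym2.eq_swap, hadj0, hadj1⟩))
      exact h1.reachable.trans hv2v0.reachable

lemma B0_eq (hG : IsTriconed G v0 v1 v2) (heo : EdgeOrderSpec G v0 v1 v2)
    (hB0 : IsMinSpanningTree G B0) : B0 = coneSet G v0 v1 v2 := by
  refine Set.Subset.antisymm ?_ (coneSet_subset_B0 hG heo hB0)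
  intro e heB0
  by_contra hecone
  have heG := hB0.1.1 heB0
  induction e using Sym2.ind with
  | _ x y =>
    have hxy : x ≠ y := ((SimpleGraph.mem_edgeSet _).mp heG).ne
    have hbr := not_reachable_deleteEdge hB0.1.2.IsAcyclic hxy heB0
    apply hbr
    have hXsub : coneSet G v0 v1 v2 ⊆ B0 \ {s(x, y)} := fun g hg =>
      ⟨coneSet_subset_B0 hG heo hB0 hg, fun h => hecone (h ▸ hg)⟩
    exact (reach_v0_aux hG hXsub x).trans (reach_v0_aux hG hXsub y).symm

/-! ### Membership characterizations -/

lemma mem_B0_v0_iff (hG : IsTriconed G v0 v1 v2) (heo : EdgeOrderSpec G v0 v1 v2)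
    (hB0 : IsMinSpanningTree G B0) {u : V} : s(v0, u) ∈ B0 ↔ G.Adj v0 u :=
  ⟨fun h => (SimpleGraph.mem_edgeSet _).mp (hB0.1.1 h), fun h => v0_edge_mem_B0 hG heo hB0 h⟩

lemma mem_B0_v1_iff (hG : IsTriconed G v0 v1 v2)
    (hcone : B0 = coneSet G v0 v1 v2) {u : V} (hu0 : u ≠ v0) :
    s(v1, u) ∈ B0 ↔ G.Adj v1 u ∧ ¬G.Adj v0 u := by
  obtain ⟨hGc, h01, h02, h12, hadj01, hadj02, htri⟩ := hG
  constructor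
  · intro h
    rw [hcone] at h
    obtain ⟨hG', hpat⟩ := h
    have hadj : G.Adj v1 u := (SimpleGraph.mem_edgeSet _).mp hG'
    refine ⟨hadj, ?_⟩
    rcases hpat with h | ⟨z, hz, hnadj⟩ | ⟨z, hz, hz0, hz1⟩
    · simp only [Sym2.mem_iff] at h
      rcases h with rfl | rfl
      · exact absurd rfl h01
      · exact absurd rfl hu0
    · rw [Sym2.eq_iff] at hz
      rcases hz with ⟨-, rfl⟩ | ⟨rfl, h⟩
      · exact hnadj
      · exact absurd h hadj.ne'
    · rw [Sym2.eq_iff] at hz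
      rcases hz with ⟨h, -⟩ | ⟨rfl, rfl⟩
      · exact absurd h h12
      · exact absurd hadj01 hz0
  · rintro ⟨hadj, hnadj⟩
    rw [hcone]
    exact ⟨(SimpleGraph.mem_edgeSet _).mpr hadj, Or.inr (Or.inl ⟨u, rfl, hnadj⟩)⟩

lemma mem_B0_v2_iff (hG : IsTriconed G v0 v1 v2)
    (hcone : B0 = coneSet G v0 v1 v2) {u : V} (hu0 : u ≠ v0) (hu1 : u ≠ v1) :
    s(v2, u) ∈ B0 ↔ G.Adj v2 u ∧ ¬G.Adj v0 u ∧ ¬G.Adj v1 u := by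
  obtain ⟨hGc, h01, h02, h12, hadj01, hadj02, htri⟩ := hG
  constructor
  · intro h
    rw [hcone] at h
    obtain ⟨hG', hpat⟩ := h
    have hadj : G.Adj v2 u := (SimpleGraph.mem_edgeSet _).mp hG'
    refine ⟨hadj, ?_⟩
    rcases hpat with h | ⟨z, hz, hnadj⟩ | ⟨z, hz, hz0, hz1⟩
    · simp only [Sym2.mem_iff] at h
      rcases h with rfl | rfl
      · exact absurd rfl h02
      · exact absurd rfl hu0
    · rw [Sym2.eq_iff] at hz
      rcases hz with ⟨h, -⟩ | ⟨rfl, rfl⟩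
      · exact absurd h.symm h12
      · exact absurd rfl hu1
    · rw [Sym2.eq_iff] at hz
      rcases hz with ⟨-, rfl⟩ | ⟨rfl, rfl⟩
      · exact ⟨hz0, hz1⟩
      · exact absurd hadj02 hz0
  · rintro ⟨hadj, hnadj0, hnadj1⟩
    rw [hcone]
    exact ⟨(SimpleGraph.mem_edgeSet _).mpr hadj, Or.inr (Or.inr ⟨u, rfl, hnadj0, hnadj1⟩)⟩

lemma v1v2_not_mem_B0 (hG : IsTriconed G v0 v1 v2)
    (hcone : B0 = coneSet G v0 v1 v2) : s(v1, v2) ∉ B0 := by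
  obtain ⟨hGc, h01, h02, h12, hadj01, hadj02, htri⟩ := hG
  intro h
  rw [hcone] at h
  obtain ⟨hG', hpat⟩ := h
  rcases hpat with h | ⟨z, hz, hnadj⟩ | ⟨z, hz, hz0, hz1⟩
  · simp only [Sym2.mem_iff] at h
    rcases h with rfl | rfl
    · exact h01 rfl
    · exact h02 rfl
  · rw [Sym2.eq_iff] at hz
    rcases hz with ⟨-, rfl⟩ | ⟨rfl, rfl⟩
    · exact hnadj hadj02
    · exact h12 rfl
  · rw [Sym2.eq_iff] at hz
    rcases hz with ⟨h, -⟩ | ⟨rfl, -⟩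
    · exact h12 h
    · exact hz0 hadj01

lemma not_mem_B0_other (hcone : B0 = coneSet G v0 v1 v2) {x y : V}
    (hx0 : x ≠ v0) (hx1 : x ≠ v1) (hx2 : x ≠ v2)
    (hy0 : y ≠ v0) (hy1 : y ≠ v1) (hy2 : y ≠ v2) : s(x, y) ∉ B0 := by
  intro h
  rw [hcone] at h
  obtain ⟨hG', hpat⟩ := h
  rcases hpat with h | ⟨z, hz, -⟩ | ⟨z, hz, -⟩
  · simp only [Sym2.mem_iff] at h
    rcases h with rfl | rfl
    · exact hx0 rfl
    · exact hy0 rfl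
  · have : v1 ∈ s(x, y) := hz ▸ Sym2.mem_mk_left _ _
    simp only [Sym2.mem_iff] at this
    rcases this with rfl | rfl
    · exact hx1 rfl
    · exact hy1 rfl
  · have : v2 ∈ s(x, y) := hz ▸ Sym2.mem_mk_left _ _
    simp only [Sym2.mem_iff] at this
    rcases this with rfl | rfl
    · exact hx2 rfl
    · exact hy2 rfl

/-! ### Children -/

lemma child_v1_iff (hG : IsTriconed G v0 v1 v2)
    (hcone : B0 = coneSet G v0 v1 v2) {u : V} :
    IsChildOf B0 v0 u v1 ↔ u ≠ v0 ∧ ¬G.Adj v0 u ∧ G.Adj v1 u := by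
  obtain ⟨hGc, h01, h02, h12, hadj01, hadj02, htri⟩ := hG
  constructor
  · rintro ⟨hmem, hnr⟩
    have hu0 : u ≠ v0 := by
      rintro rfl
      exact hnr (Reachable.refl _)
    have := (mem_B0_v1_iff ⟨hGc, h01, h02, h12, hadj01, hadj02, htri⟩ hcone hu0).mp
      (Sym2.eq_swap ▸ hmem)
    exact ⟨hu0, this.2, this.1⟩
  · rintro ⟨hu0, hnadj0, hadj1⟩
    refine ⟨Sym2.eq_swap ▸ (mem_B0_v1_iff ⟨hGc, h01, h02, h12, hadj01, hadj02, htri⟩ hcone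
      hu0).mpr ⟨hadj1, hnadj0⟩, ?_⟩
    refine not_reachable_of_isolated ?_ hu0
    rintro y ⟨hyB0, hyne⟩
    rw [hcone] at hyB0
    obtain ⟨hG', hpat⟩ := hyB0
    have hadjuy : G.Adj u y := (SimpleGraph.mem_edgeSet _).mp hG'
    rcases hpat with h | ⟨z, hz, hnadj⟩ | ⟨z, hz, hz0, hz1⟩
    · simp only [Sym2.mem_iff] at h
      rcases h with rfl | rfl
      · exact hu0 rfl
      · exact hnadj0 hadjuy.symm
    · rw [Sym2.eq_iff] at hz
      rcases hz with ⟨rfl, -⟩ | ⟨rfl, rfl⟩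
      · exact hadj1.ne rfl
      · exact hyne rfl
    · rw [Sym2.eq_iff] at hz
      rcases hz with ⟨rfl, -⟩ | ⟨rfl, rfl⟩
      · exact hnadj0 hadj02
      · exact hz1 hadj1

lemma child_v2_iff (hG : IsTriconed G v0 v1 v2)
    (hcone : B0 = coneSet G v0 v1 v2) {u : V} :
    IsChildOf B0 v0 u v2 ↔ u ≠ v0 ∧ u ≠ v1 ∧ ¬G.Adj v0 u ∧ ¬G.Adj v1 u ∧ G.Adj v2 u := by
  obtain ⟨hGc, h01, h02, h12, hadj01, hadj02, htri⟩ := hG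
  have hGt : IsTriconed G v0 v1 v2 := ⟨hGc, h01, h02, h12, hadj01, hadj02, htri⟩
  constructor
  · rintro ⟨hmem, hnr⟩
    have hu0 : u ≠ v0 := by
      rintro rfl
      exact hnr (Reachable.refl _)
    have hu1 : u ≠ v1 := by
      rintro rfl
      exact v1v2_not_mem_B0 hGt hcone (Sym2.eq_swap ▸ hmem)
    have := (mem_B0_v2_iff hGt hcone hu0 hu1).mp (Sym2.eq_swap ▸ hmem)
    exact ⟨hu0, hu1, this.2.1, this.2.2, this.1⟩
  · rintro ⟨hu0, hu1, hnadj0, hnadj1, hadj2⟩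
    refine ⟨Sym2.eq_swap ▸ (mem_B0_v2_iff hGt hcone hu0 hu1).mpr ⟨hadj2, hnadj0, hnadj1⟩, ?_⟩
    refine not_reachable_of_isolated ?_ hu0
    rintro y ⟨hyB0, hyne⟩
    rw [hcone] at hyB0
    obtain ⟨hG', hpat⟩ := hyB0
    have hadjuy : G.Adj u y := (SimpleGraph.mem_edgeSet _).mp hG'
    rcases hpat with h | ⟨z, hz, hnadj⟩ | ⟨z, hz, hz0, hz1⟩
    · simp only [Sym2.mem_iff] at h
      rcases h with rfl | rfl
      · exact hu0 rfl
      · exact hnadj0 hadjuy.symm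
    · rw [Sym2.eq_iff] at hz
      rcases hz with ⟨rfl, -⟩ | ⟨rfl, rfl⟩
      · exact hu1 rfl
      · exact hnadj1 hadjuy.symm
    · rw [Sym2.eq_iff] at hz
      rcases hz with ⟨rfl, -⟩ | ⟨rfl, rfl⟩
      · exact hadj2.ne rfl
      · exact hyne rfl

lemma child_v0 (hG : IsTriconed G v0 v1 v2) (hcone : B0 = coneSet G v0 v1 v2) {u : V}
    (hu0 : u ≠ v0) (hu1 : u ≠ v1) (hu2 : u ≠ v2) (hadj0 : G.Adj v0 u) :
    IsChildOf B0 v0 u v0 := by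
  obtain ⟨hGc, h01, h02, h12, hadj01, hadj02, htri⟩ := hG
  refine ⟨by rw [hcone]; exact ⟨(SimpleGraph.mem_edgeSet _).mpr hadj0.symm,
    Or.inl (Sym2.mem_mk_right _ _)⟩, ?_⟩
  refine not_reachable_of_isolated ?_ hu0
  rintro y ⟨hyB0, hyne⟩
  rw [hcone] at hyB0
  obtain ⟨hG', hpat⟩ := hyB0
  rcases hpat with h | ⟨z, hz, hnadj⟩ | ⟨z, hz, hz0, hz1⟩
  · simp only [Sym2.mem_iff] at h
    rcases h with rfl | rfl
    · exact hu0 rfl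
    · exact hyne rfl
  · rw [Sym2.eq_iff] at hz
    rcases hz with ⟨rfl, -⟩ | ⟨rfl, rfl⟩
    · exact hu1 rfl
    · exact hnadj hadj0
  · rw [Sym2.eq_iff] at hz
    rcases hz with ⟨rfl, -⟩ | ⟨rfl, rfl⟩
    · exact hu2 rfl
    · exact hz0 hadj0

lemma not_child_v0_self (B0 : Set (Sym2 V)) (v0 : V) (p : V) : ¬IsChildOf B0 v0 v0 p := by
  rintro ⟨-, hnr⟩
  exact hnr (Reachable.refl _)

lemma children_of_normal (hG : IsTriconed G v0 v1 v2) (hcone : B0 = coneSet G v0 v1 v2)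
    {u p : V} (hu0 : u ≠ v0) (hu1 : u ≠ v1) (hu2 : u ≠ v2)
    (h : IsChildOf B0 v0 u p) :
    (p = v0 ∧ G.Adj v0 u) ∨ (p = v1 ∧ ¬G.Adj v0 u ∧ G.Adj v1 u) ∨
      (p = v2 ∧ ¬G.Adj v0 u ∧ ¬G.Adj v1 u ∧ G.Adj v2 u) := by
  obtain ⟨hmem, -⟩ := h
  rw [hcone] at hmem
  obtain ⟨hG', hpat⟩ := hmem
  have hadjup : G.Adj u p := (SimpleGraph.mem_edgeSet _).mp hG'
  rcases hpat with h | ⟨z, hz, hnadj⟩ | ⟨z, hz, hz0, hz1⟩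
  · simp only [Sym2.mem_iff] at h
    rcases h with rfl | rfl
    · exact absurd rfl hu0
    · exact Or.inl ⟨rfl, hadjup.symm⟩
  · rw [Sym2.eq_iff] at hz
    rcases hz with ⟨rfl, -⟩ | ⟨rfl, rfl⟩
    · exact absurd rfl hu1
    · exact Or.inr (Or.inl ⟨rfl, hnadj, hadjup.symm⟩)
  · rw [Sym2.eq_iff] at hz
    rcases hz with ⟨rfl, -⟩ | ⟨rfl, rfl⟩
    · exact absurd rfl hu2
    · exact Or.inr (Or.inr ⟨rfl, hz0, hz1, hadjup.symm⟩)

/-! ### Slots and marks -/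

def S0p (G : SimpleGraph V) (v0 v1 v2 : V) (B : Set (Sym2 V)) (u : V) : Prop :=
  u ≠ v0 ∧ u ≠ v1 ∧ u ≠ v2 ∧ G.Adj v0 u ∧ s(u, v0) ∈ B

def S1p (G : SimpleGraph V) (v0 v1 v2 : V) (B : Set (Sym2 V)) (u : V) : Prop :=
  u = v1 ∨ (u ≠ v0 ∧ u ≠ v2 ∧ ¬G.Adj v0 u ∧ G.Adj v1 u ∧ s(u, v1) ∈ B)

def S2p (G : SimpleGraph V) (v0 v1 v2 : V) (B : Set (Sym2 V)) (u : V) : Prop :=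
  u = v2 ∨ (u ≠ v0 ∧ u ≠ v1 ∧ ¬G.Adj v0 u ∧ ¬G.Adj v1 u ∧ G.Adj v2 u ∧ s(u, v2) ∈ B)

lemma S0p_ne_v0 {u : V} (h : S0p G v0 v1 v2 B u) : u ≠ v0 := h.1

lemma S1p_ne_v0 (hG : IsTriconed G v0 v1 v2) {u : V} (h : S1p G v0 v1 v2 B u) : u ≠ v0 := by
  rcases h with rfl | h
  · exact hG.2.1.symm
  · exact h.1

lemma S2p_ne_v0 (hG : IsTriconed G v0 v1 v2) {u : V} (h : S2p G v0 v1 v2 B u) : u ≠ v0 := by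
  rcases h with rfl | h
  · exact hG.2.2.1.symm
  · exact h.1

lemma S1_vType (hG : IsTriconed G v0 v1 v2) (hcone : B0 = coneSet G v0 v1 v2) {u : V}
    (h : S1p G v0 v1 v2 B u) : vType B0 v0 v1 v2 u = 1 := by
  unfold vType
  rw [if_pos]
  rcases h with rfl | ⟨hu0, hu2, hnadj0, hadj1, -⟩
  · exact Or.inl rfl
  · exact Or.inr ((child_v1_iff hG hcone).mpr ⟨hu0, hnadj0, hadj1⟩)

lemma S2_vType (hG : IsTriconed G v0 v1 v2) (hcone : B0 = coneSet G v0 v1 v2) {u : V}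
    (h : S2p G v0 v1 v2 B u) : vType B0 v0 v1 v2 u = 2 := by
  unfold vType
  rw [if_neg, if_pos]
  · rcases h with rfl | ⟨hu0, hu1, hnadj0, hnadj1, hadj2, -⟩
    · exact Or.inl rfl
    · exact Or.inr ((child_v2_iff hG hcone).mpr ⟨hu0, hu1, hnadj0, hnadj1, hadj2⟩)
  · rintro (rfl | hch)
    · rcases h with h | h
      · exact hG.2.2.2.1 h
      · exact h.2.1 rfl
    · have := (child_v1_iff hG hcone).mp hch
      rcases h with rfl | h
      · exact this.2.1 hG.2.2.2.2.2.1
      · exact h.2.2.2.1 this.2.2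

lemma S0_vType (hG : IsTriconed G v0 v1 v2) (hcone : B0 = coneSet G v0 v1 v2) {u : V}
    (h : S0p G v0 v1 v2 B u) : vType B0 v0 v1 v2 u = 0 := by
  obtain ⟨hu0, hu1, hu2, hadj0, -⟩ := h
  unfold vType
  rw [if_neg, if_neg]
  · rintro (rfl | hch)
    · exact hu2 rfl
    · exact ((child_v2_iff hG hcone).mp hch).2.2.1 hadj0
  · rintro (rfl | hch)
    · exact hu1 rfl
    · exact ((child_v1_iff hG hcone).mp hch).2.1 hadj0

lemma vType_v1 (hG : IsTriconed G v0 v1 v2) (hcone : B0 = coneSet G v0 v1 v2) :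
    vType B0 v0 v1 v2 v1 = 1 :=
  S1_vType (B := (∅ : Set (Sym2 V))) hG hcone (Or.inl rfl)

lemma vType_v2 (hG : IsTriconed G v0 v1 v2) (hcone : B0 = coneSet G v0 v1 v2) :
    vType B0 v0 v1 v2 v2 = 2 :=
  S2_vType (B := (∅ : Set (Sym2 V))) hG hcone (Or.inl rfl)

lemma marked_iff (hG : IsTriconed G v0 v1 v2) (hcone : B0 = coneSet G v0 v1 v2)
    (hphi : IsPhi1 G v0 v1 v2 B0 B E m) {u : V} :
    1 ≤ m u ↔ (S0p G v0 v1 v2 B u ∨ S1p G v0 v1 v2 B u ∨ S2p G v0 v1 v2 B u) := by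
  rw [hphi.2.2.1 u]
  constructor
  · rintro (rfl | rfl | ⟨p, hch, hpB⟩)
    · exact Or.inr (Or.inl (Or.inl rfl))
    · exact Or.inr (Or.inr (Or.inl rfl))
    · by_cases hu0 : u = v0
      · exact absurd hch (hu0 ▸ not_child_v0_self B0 v0 p)
      by_cases hu1 : u = v1
      · exact Or.inr (Or.inl (Or.inl hu1))
      by_cases hu2 : u = v2
      · exact Or.inr (Or.inr (Or.inl hu2))
      rcases children_of_normal hG hcone hu0 hu1 hu2 hch with ⟨rfl, h⟩ | ⟨rfl, h⟩ | ⟨rfl, h⟩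
      · exact Or.inl ⟨hu0, hu1, hu2, h, hpB⟩
      · exact Or.inr (Or.inl (Or.inr ⟨hu0, hu2, h.1, h.2, hpB⟩))
      · exact Or.inr (Or.inr (Or.inr ⟨hu0, hu1, h.1, h.2.1, h.2.2, hpB⟩))
  · rintro (⟨hu0, hu1, hu2, hadj0, hB'⟩ | h | h)
    · exact Or.inr (Or.inr ⟨v0, child_v0 hG hcone hu0 hu1 hu2 hadj0, hB'⟩)
    · rcases h with rfl | ⟨hu0, hu2, hnadj0, hadj1, hB'⟩
      · exact Or.inl rfl
      · exact Or.inr (Or.inr ⟨v1, (child_v1_iff hG hcone).mpr ⟨hu0, hnadj0, hadj1⟩, hB'⟩)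
    · rcases h with rfl | ⟨hu0, hu1, hnadj0, hnadj1, hadj2, hB'⟩
      · exact Or.inr (Or.inl rfl)
      · exact Or.inr (Or.inr ⟨v2,
          (child_v2_iff hG hcone).mpr ⟨hu0, hu1, hnadj0, hnadj1, hadj2⟩, hB'⟩)

lemma S_disjoint_classes (hG : IsTriconed G v0 v1 v2) (hcone : B0 = coneSet G v0 v1 v2) :
    (∀ u, S0p G v0 v1 v2 B u → ¬S1p G v0 v1 v2 B u) ∧
    (∀ u, S0p G v0 v1 v2 B u → ¬S2p G v0 v1 v2 B u) ∧
    (∀ u, S1p G v0 v1 v2 B u → ¬S2p G v0 v1 v2 B u) := by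
  refine ⟨fun u h0 h1 => ?_, fun u h0 h2 => ?_, fun u h1 h2 => ?_⟩
  · have := S0_vType (B := B) hG hcone h0
    have := S1_vType hG hcone h1
    omega
  · have := S0_vType (B := B) hG hcone h0
    have := S2_vType hG hcone h2
    omega
  · have := S1_vType hG hcone h1
    have := S2_vType hG hcone h2
    omega

/-! ### The edge set of `G_red ∩ B` -/

lemma E_eq (hG : IsTriconed G v0 v1 v2) (heo : EdgeOrderSpec G v0 v1 v2)
    (hB0 : IsMinSpanningTree G B0) (hB : IsSpanningTree G B)
    (hphi : IsPhi1 G v0 v1 v2 B0 B E m) : E = B \ B0 := by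
  rw [hphi.1]
  ext e
  constructor
  · rintro ⟨heB, -, henB0, -⟩
    exact ⟨heB, henB0⟩
  · rintro ⟨heB, henB0⟩
    refine ⟨heB, hB.1 heB, henB0, ?_⟩
    intro hv0
    obtain ⟨y, rfl⟩ := Sym2.mem_iff_exists.mp hv0
    exact henB0 (v0_edge_mem_B0 hG heo hB0 ((SimpleGraph.mem_edgeSet _).mp (hB.1 heB)))

lemma v0_isolated_E (hE : E = B \ B0) (hG : IsTriconed G v0 v1 v2)
    (heo : EdgeOrderSpec G v0 v1 v2) (hB0 : IsMinSpanningTree G B0)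
    (hB : IsSpanningTree G B) : ∀ y, s(v0, y) ∉ E := by
  intro y hy
  rw [hE] at hy
  exact hy.2 (v0_edge_mem_B0 hG heo hB0 ((SimpleGraph.mem_edgeSet _).mp (hB.1 hy.1)))

lemma not_reach_E_v0 (hE : E = B \ B0) (hG : IsTriconed G v0 v1 v2)
    (heo : EdgeOrderSpec G v0 v1 v2) (hB0 : IsMinSpanningTree G B0)
    (hB : IsSpanningTree G B) {u : V} (hu : u ≠ v0) :
    ¬(fromEdgeSet E).Reachable u v0 := by
  intro h
  refine not_reachable_of_isolated (S := E) ?_ hu.symm h.symm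
  intro y
  exact v0_isolated_E hE hG heo hB0 hB y

/-! ### Doubly marked vertices -/

lemma dbl_S2 (hG : IsTriconed G v0 v1 v2) (hcone : B0 = coneSet G v0 v1 v2)
    {x : V} (h : DoublyMarkedAt B0 B v0 v1 v2 x) : S2p G v0 v1 v2 B x := by
  obtain ⟨h02B, p, hpath, h02e, i, hpre, ⟨e, hei, heB0⟩, hx⟩ := h
  have hilen : i < p.length := by
    by_contra hlt
    rw [List.getElem?_eq_none (by rw [Walk.length_edges]; omega)] at hei
    cases hei
  cases i with
  | zero =>
    rw [Walk.getVert_zero] at hx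
    exact Or.inl hx
  | succ j =>
    have h0len : 0 < p.length := by omega
    have he0 := edges_getElem?_eq p 0 h0len
    rw [Walk.getVert_zero] at he0
    obtain ⟨z, hzdef⟩ : ∃ z', p.getVert 1 = z' := ⟨_, rfl⟩
    rw [hzdef] at he0
    have he0B0 : s(v2, z) ∈ B0 := hpre 0 (by omega) _ he0
    have he0mem : s(v2, z) ∈ p.edges := List.mem_of_getElem? he0
    have he0B : s(v2, z) ∈ B := by
      have := p.edges_subset_edgeSet he0mem
      rw [edgeSet_fromEdgeSet] at this
      exact this.1
    have he0ne02 : s(v2, z) ≠ s(v0, v2) := fun hh => h02e (hh ▸ he0mem)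
    have hz0 : z ≠ v0 := by
      rintro rfl
      exact he0ne02 Sym2.eq_swap
    have hz1 : z ≠ v1 := by
      rintro rfl
      exact v1v2_not_mem_B0 hG hcone (Sym2.eq_swap ▸ he0B0)
    have hzfacts := (mem_B0_v2_iff hG hcone hz0 hz1).mp he0B0
    cases j with
    | zero =>
      have hxz : x = z := by rw [hx, ← hzdef]
      rw [hxz]
      exact Or.inr ⟨hz0, hz1, hzfacts.2.1, hzfacts.2.2, hzfacts.1, Sym2.eq_swap ▸ he0B⟩
    | succ k =>
      exfalso
      have h1len : 1 < p.length := by omega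
      have he1 := edges_getElem?_eq p 1 h1len
      rw [hzdef] at he1
      obtain ⟨z2, hz2def⟩ : ∃ z', p.getVert 2 = z' := ⟨_, rfl⟩
      rw [hz2def] at he1
      have he1B0 : s(z, z2) ∈ B0 := hpre 1 (by omega) _ he1
      have hzz2G : G.Adj z z2 := by
        have : s(z, z2) ∈ coneSet G v0 v1 v2 := hcone ▸ he1B0
        exact (SimpleGraph.mem_edgeSet _).mp this.1
      have hz2v0 : z2 ≠ v0 := by
        rintro rfl
        exact hzfacts.2.1 hzz2G.symm
      have hz2v1 : z2 ≠ v1 := by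
        rintro rfl
        exact hzfacts.2.2 hzz2G.symm
      have hz2v2 : z2 ≠ v2 := by
        rintro rfl
        have hnd := hpath.isTrail.edges_nodup
        have heq : p.edges[0]? = p.edges[1]? := by
          rw [he0, he1, Sym2.eq_swap]
        have := (List.getElem?_inj (by rw [Walk.length_edges]; omega) hnd).mp heq
        omega
      exact not_mem_B0_other hcone hz0 hz1 (hzfacts.1.ne') hz2v0 hz2v1 hz2v2 he1B0

lemma exists_dbl_of_lhs (hG : IsTriconed G v0 v1 v2) (heo : EdgeOrderSpec G v0 v1 v2)
    (hB0 : IsMinSpanningTree G B0) (hB : IsSpanningTree G B)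
    (h02B : s(v0, v2) ∈ B) (hphi : IsPhi1 G v0 v1 v2 B0 B E m)
    (hlhs : ∃ p : (fromEdgeSet B).Walk v1 v2, p.IsPath ∧ s(v0, v2) ∉ p.edges) :
    ∃ x, m x = 2 := by
  obtain ⟨p, hpath, h02e⟩ := hlhs
  set q := p.reverse with hqdef
  have hq02 : s(v0, v2) ∉ q.edges := by
    rw [hqdef, Walk.edges_reverse]
    simpa using h02e
  have hall : ¬∀ e ∈ q.edges, e ∈ B0 := by
    intro hall
    have h02B0 : s(v0, v2) ∈ B0 := v0_edge_mem_B0 hG heo hB0 hG.2.2.2.2.2.1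
    apply not_reachable_deleteEdge hB0.1.2.IsAcyclic hG.2.2.1 h02B0
    have hstep : (fromEdgeSet (B0 \ {s(v0, v2)})).Adj v0 v1 := by
      refine (fromEdgeSet_adj _).mpr ⟨⟨v0_edge_mem_B0 hG heo hB0 hG.2.2.2.2.1, ?_⟩, hG.2.1⟩
      simp only [Set.mem_singleton_iff, Sym2.eq_iff]
      rintro (⟨-, h⟩ | ⟨h, -⟩)
      · exact hG.2.2.2.1 h
      · exact hG.2.2.1 h
    have htrans : ∀ e ∈ p.edges, e ∈ (fromEdgeSet (B0 \ {s(v0, v2)})).edgeSet := by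
      intro e he
      have h1 := p.edges_subset_edgeSet he
      rw [edgeSet_fromEdgeSet] at h1 ⊢
      refine ⟨⟨hall e ?_, fun h => h02e (h ▸ he)⟩, h1.2⟩
      rw [hqdef, Walk.edges_reverse]
      simpa using he
    exact hstep.reachable.trans (Walk.reachable (p.transfer _ htrans))
  push_neg at hall
  obtain ⟨e0, he0mem, he0nB0⟩ := hall
  obtain ⟨j0, hj0⟩ := List.mem_iff_getElem?.mp he0mem
  have hex : ∃ j, ∃ e, q.edges[j]? = some e ∧ e ∉ B0 := ⟨j0, e0, hj0, he0nB0⟩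
  classical
  set i := Nat.find hex with hidef
  obtain ⟨e, hei, heB0⟩ := Nat.find_spec hex
  have hdbl : DoublyMarkedAt B0 B v0 v1 v2 (q.getVert i) := by
    refine ⟨h02B, q, hpath.reverse, hq02, i, ?_, ⟨e, hei, heB0⟩, rfl⟩
    intro j hj e' hje'
    by_contra he'
    exact Nat.find_min hex hj ⟨e', hje', he'⟩
  exact ⟨q.getVert i, (hphi.2.2.2 _).mpr hdbl⟩

lemma lhs_of_dbl (hphi : IsPhi1 G v0 v1 v2 B0 B E m) {x : V} (hx : m x = 2) :
    ∃ p : (fromEdgeSet B).Walk v1 v2, p.IsPath ∧ s(v0, v2) ∉ p.edges := by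
  obtain ⟨-, p, hpath, h02e, -⟩ := (hphi.2.2.2 x).mp hx
  exact ⟨p.reverse, hpath.reverse, by rw [Walk.edges_reverse]; simpa using h02e⟩

/-! ### Cycle exclusions -/

lemma E_avoid (hE : E = B \ B0) {f : Sym2 V} (hf : f ∈ B0) : E ⊆ B \ {f} := by
  intro e he
  rw [hE] at he
  refine ⟨he.1, fun hh => ?_⟩
  rw [Set.mem_singleton_iff] at hh
  exact he.2 (hh ▸ hf)

lemma cycA (hB : IsSpanningTree G B) (hE : E = B \ B0) {a h : V}
    (haB : s(a, h) ∈ B) (haB0 : s(a, h) ∈ B0) (hne : a ≠ h)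
    (hr : (fromEdgeSet E).Reachable a h) : False :=
  not_reachable_deleteEdge hB.2.IsAcyclic hne haB
    (hr.mono (fromEdgeSet_mono (E_avoid hE haB0)))

lemma cycB (hB : IsSpanningTree G B) (hE : E = B \ B0) {a a' h : V}
    (haa' : a ≠ a') (h1B : s(a, h) ∈ B)
    (h2B : s(a', h) ∈ B) (h2B0 : s(a', h) ∈ B0) (hne : a ≠ h) (hne' : a' ≠ h)
    (hr : (fromEdgeSet E).Reachable a a') : False := by
  have hbr := not_reachable_deleteEdge hB.2.IsAcyclic hne' h2B
  apply hbr
  have hstep : (fromEdgeSet (B \ {s(a', h)})).Adj a h := by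
    refine (fromEdgeSet_adj _).mpr ⟨⟨h1B, ?_⟩, hne⟩
    rw [Set.mem_singleton_iff, Sym2.eq_iff]
    rintro (⟨h1, -⟩ | ⟨rfl, h2⟩)
    · exact haa' h1
    · exact hne' h2.symm
  exact (hr.symm.mono (fromEdgeSet_mono (E_avoid hE h2B0))).trans hstep.reachable

lemma cycC (hG : IsTriconed G v0 v1 v2) (heo : EdgeOrderSpec G v0 v1 v2)
    (hB0 : IsMinSpanningTree G B0) (hB : IsSpanningTree G B) (hE : E = B \ B0)
    (h02B : s(v0, v2) ∈ B) {u0 w : V}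
    (h1B : s(u0, v0) ∈ B) (hu0v2 : u0 ≠ v2) (hu0v0 : u0 ≠ v0)
    (hw : w = v2 ∨ (w ≠ v0 ∧ s(w, v2) ∈ B))
    (hr : (fromEdgeSet E).Reachable u0 w) : False := by
  have h02B0 : s(v0, v2) ∈ B0 := v0_edge_mem_B0 hG heo hB0 hG.2.2.2.2.2.1
  have hbr := not_reachable_deleteEdge hB.2.IsAcyclic hG.2.2.1 h02B
  apply hbr
  have hstep1 : (fromEdgeSet (B \ {s(v0, v2)})).Adj v0 u0 := by
    refine (fromEdgeSet_adj _).mpr ⟨⟨Sym2.eq_swap ▸ h1B, ?_⟩, fun h => hu0v0 h.symm⟩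
    rw [Set.mem_singleton_iff, Sym2.eq_iff]
    rintro (⟨-, h2⟩ | ⟨h1, -⟩)
    · exact hu0v2 h2
    · exact hG.2.2.1 h1
  have hmid : (fromEdgeSet (B \ {s(v0, v2)})).Reachable u0 w :=
    hr.mono (fromEdgeSet_mono (E_avoid hE h02B0))
  rcases hw with rfl | ⟨hwv0, hwB⟩
  · exact hstep1.reachable.trans hmid
  · have hstep2 : (fromEdgeSet (B \ {s(v0, v2)})).Adj w v2 := by
      refine (fromEdgeSet_adj _).mpr ⟨⟨hwB, ?_⟩, ?_⟩
      · rw [Set.mem_singleton_iff, Sym2.eq_iff]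
        rintro (⟨h1, -⟩ | ⟨-, h2⟩)
        · exact hwv0 h1
        · exact hG.2.2.1 h2.symm
      · intro h
        have : s(w, v2) ∈ G.edgeSet := hB.1 hwB
        rw [h] at this
        exact ((SimpleGraph.mem_edgeSet _).mp this).ne rfl
    exact (hstep1.reachable.trans hmid).trans hstep2.reachable

/-! ### Pairwise exclusions between marked vertices in one component -/

lemma S1_cone_B0 (hG : IsTriconed G v0 v1 v2) (hcone : B0 = coneSet G v0 v1 v2) {u : V}
    (h : u ≠ v0 ∧ u ≠ v2 ∧ ¬G.Adj v0 u ∧ G.Adj v1 u ∧ s(u, v1) ∈ B) : s(u, v1) ∈ B0 :=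
  Sym2.eq_swap ▸ (mem_B0_v1_iff hG hcone h.1).mpr ⟨h.2.2.2.1, h.2.2.1⟩

lemma S2_cone_B0 (hG : IsTriconed G v0 v1 v2) (hcone : B0 = coneSet G v0 v1 v2) {u : V}
    (h : u ≠ v0 ∧ u ≠ v1 ∧ ¬G.Adj v0 u ∧ ¬G.Adj v1 u ∧ G.Adj v2 u ∧ s(u, v2) ∈ B) :
    s(u, v2) ∈ B0 :=
  Sym2.eq_swap ▸ (mem_B0_v2_iff hG hcone h.1 h.2.1).mpr ⟨h.2.2.2.2.1, h.2.2.1, h.2.2.2.1⟩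

lemma no_two_S1 (hG : IsTriconed G v0 v1 v2) (hcone : B0 = coneSet G v0 v1 v2)
    (hB : IsSpanningTree G B) (hE : E = B \ B0) {u u' : V}
    (h : S1p G v0 v1 v2 B u) (h' : S1p G v0 v1 v2 B u') (hne : u ≠ u')
    (hr : (fromEdgeSet E).Reachable u u') : False := by
  rcases h with rfl | h <;> rcases h' with rfl | h'
  · exact hne rfl
  · exact cycA hB hE h'.2.2.2.2 (S1_cone_B0 hG hcone h') h'.2.2.2.1.ne' hr.symm
  · exact cycA hB hE h.2.2.2.2 (S1_cone_B0 hG hcone h) h.2.2.2.1.ne' hr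
  · exact cycB hB hE hne h.2.2.2.2 h'.2.2.2.2 (S1_cone_B0 hG hcone h')
      h.2.2.2.1.ne' h'.2.2.2.1.ne' hr

lemma no_two_S2 (hG : IsTriconed G v0 v1 v2) (hcone : B0 = coneSet G v0 v1 v2)
    (hB : IsSpanningTree G B) (hE : E = B \ B0) {u u' : V}
    (h : S2p G v0 v1 v2 B u) (h' : S2p G v0 v1 v2 B u') (hne : u ≠ u')
    (hr : (fromEdgeSet E).Reachable u u') : False := by
  rcases h with rfl | h <;> rcases h' with rfl | h'
  · exact hne rfl
  · exact cycA hB hE h'.2.2.2.2.2 (S2_cone_B0 hG hcone h') h'.2.2.2.2.1.ne' hr.symm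
  · exact cycA hB hE h.2.2.2.2.2 (S2_cone_B0 hG hcone h) h.2.2.2.2.1.ne' hr
  · exact cycB hB hE hne h.2.2.2.2.2 h'.2.2.2.2.2 (S2_cone_B0 hG hcone h')
      h.2.2.2.2.1.ne' h'.2.2.2.2.1.ne' hr

lemma no_two_S0 (hG : IsTriconed G v0 v1 v2) (hcone : B0 = coneSet G v0 v1 v2)
    (hB : IsSpanningTree G B) (hE : E = B \ B0) {u u' : V}
    (h : S0p G v0 v1 v2 B u) (h' : S0p G v0 v1 v2 B u') (hne : u ≠ u')
    (hr : (fromEdgeSet E).Reachable u u') : False := by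
  obtain ⟨hu0, hu1, hu2, hadj, huB⟩ := h
  obtain ⟨hu0', hu1', hu2', hadj', huB'⟩ := h'
  have h2B0 : s(u', v0) ∈ B0 := by
    rw [hcone]
    exact ⟨(SimpleGraph.mem_edgeSet _).mpr hadj'.symm, Or.inl (Sym2.mem_mk_right _ _)⟩
  exact cycB hB hE hne huB huB' h2B0 hu0 hu0' hr

lemma no_S0_S2 (hG : IsTriconed G v0 v1 v2) (heo : EdgeOrderSpec G v0 v1 v2)
    (hB0 : IsMinSpanningTree G B0)
    (hB : IsSpanningTree G B) (hE : E = B \ B0) (h02B : s(v0, v2) ∈ B) {u w : V}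
    (h : S0p G v0 v1 v2 B u) (h' : S2p G v0 v1 v2 B w)
    (hr : (fromEdgeSet E).Reachable u w) : False := by
  obtain ⟨hu0, hu1, hu2, hadj, huB⟩ := h
  refine cycC hG heo hB0 hB hE h02B huB hu2 hu0 ?_ hr
  rcases h' with rfl | h'
  · exact Or.inl rfl
  · exact Or.inr ⟨h'.1, h'.2.2.2.2.2⟩

/-! ### Sums and blueprint multiplicities -/

lemma compMarks_eq_single {u a : V} (hra : (fromEdgeSet E).Reachable u a)
    (hother : ∀ x, (fromEdgeSet E).Reachable u x → 1 ≤ m x → x = a) :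
    compMarks E m u = m a := by
  unfold compMarks
  rw [← Finset.sum_subset (Finset.subset_univ {a})]
  · rw [Finset.sum_singleton, if_pos hra]
  · intro x _ hx
    rw [Finset.mem_singleton] at hx
    by_cases hrx : (fromEdgeSet E).Reachable u x
    · rw [if_pos hrx]
      by_contra hm
      exact hx (hother x hrx (Nat.one_le_iff_ne_zero.mpr hm))
    · rw [if_neg hrx]

lemma compMarks_eq_pair {u a b : V} (hab : a ≠ b)
    (hra : (fromEdgeSet E).Reachable u a) (hrb : (fromEdgeSet E).Reachable u b)
    (hother : ∀ x, (fromEdgeSet E).Reachable u x → 1 ≤ m x → x = a ∨ x = b) :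
    compMarks E m u = m a + m b := by
  unfold compMarks
  rw [← Finset.sum_subset (Finset.subset_univ {a, b})]
  · rw [Finset.sum_pair hab, if_pos hra, if_pos hrb]
  · intro x _ hx
    rw [Finset.mem_insert, Finset.mem_singleton] at hx
    push_neg at hx
    by_cases hrx : (fromEdgeSet E).Reachable u x
    · rw [if_pos hrx]
      by_contra hm
      rcases hother x hrx (Nat.one_le_iff_ne_zero.mpr hm) with h | h
      · exact hx.1 h
      · exact hx.2 h
    · rw [if_neg hrx]

lemma markTypeCount_ge_one {u x : V} {t : ℕ} (hr : (fromEdgeSet E).Reachable u x)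
    (hcase : (1 ≤ m x ∧ vType B0 v0 v1 v2 x = t) ∨ (m x = 2 ∧ t = 0)) :
    1 ≤ markTypeCount B0 v0 v1 v2 E m u t := by
  unfold markTypeCount
  have hle : (if (fromEdgeSet E).Reachable u x then
      ((if 1 ≤ m x ∧ vType B0 v0 v1 v2 x = t then 1 else 0) +
        (if m x = 2 ∧ t = 0 then 1 else 0)) else 0) ≤
      ∑ y : V, if (fromEdgeSet E).Reachable u y then
      ((if 1 ≤ m y ∧ vType B0 v0 v1 v2 y = t then 1 else 0) +
        (if m y = 2 ∧ t = 0 then 1 else 0)) else 0 :=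
    Finset.single_le_sum (f := fun y => if (fromEdgeSet E).Reachable u y then
      ((if 1 ≤ m y ∧ vType B0 v0 v1 v2 y = t then 1 else 0) +
        (if m y = 2 ∧ t = 0 then 1 else 0)) else 0)
      (fun i _ => Nat.zero_le _) (Finset.mem_univ x)
  refine le_trans ?_ hle
  rw [if_pos hr]
  rcases hcase with hc | hc
  · rw [if_pos hc]
    omega
  · rw [if_pos hc]
    omega

lemma markTypeCount_witness {u : V} {t : ℕ}
    (h : 1 ≤ markTypeCount B0 v0 v1 v2 E m u t) :
    ∃ x, (fromEdgeSet E).Reachable u x ∧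
      ((1 ≤ m x ∧ vType B0 v0 v1 v2 x = t) ∨ (m x = 2 ∧ t = 0)) := by
  unfold markTypeCount at h
  obtain ⟨x, -, hx⟩ := Finset.exists_ne_zero_of_sum_ne_zero (Nat.pos_iff_ne_zero.mp h)
  by_cases hrx : (fromEdgeSet E).Reachable u x
  · rw [if_pos hrx] at hx
    refine ⟨x, hrx, ?_⟩
    by_contra hc
    rw [not_or] at hc
    rw [if_neg hc.1, if_neg hc.2] at hx
    exact hx rfl
  · rw [if_neg hrx] at hx
    exact absurd rfl hx

lemma bpMult_ge_one {a b : ℕ} {u : V} (hu : u ≠ v0)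
    (hcond : (compMarks E m u = 2 ∧ a ≠ b ∧ 1 ≤ markTypeCount B0 v0 v1 v2 E m u a ∧
        1 ≤ markTypeCount B0 v0 v1 v2 E m u b) ∨
      (compMarks E m u = 3 ∧ (({a, b} : Set ℕ) = {0, 1} ∨ ({a, b} : Set ℕ) = {0, 2}))) :
    1 ≤ bpMult B0 v0 v1 v2 E m a b := by
  unfold bpMult
  have hfin : {c : (fromEdgeSet E).ConnectedComponent |
      ∃ u', u' ≠ v0 ∧ (fromEdgeSet E).connectedComponentMk u' = c ∧
        ((compMarks E m u' = 2 ∧ a ≠ b ∧ 1 ≤ markTypeCount B0 v0 v1 v2 E m u' a ∧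
            1 ≤ markTypeCount B0 v0 v1 v2 E m u' b) ∨
          (compMarks E m u' = 3 ∧
            (({a, b} : Set ℕ) = {0, 1} ∨ ({a, b} : Set ℕ) = {0, 2})))}.Finite :=
    Set.toFinite _
  rw [Nat.one_le_iff_ne_zero]
  intro h0
  have := (Set.ncard_eq_zero hfin).mp h0
  have hne : ((fromEdgeSet E).connectedComponentMk u) ∈
      {c : (fromEdgeSet E).ConnectedComponent |
      ∃ u', u' ≠ v0 ∧ (fromEdgeSet E).connectedComponentMk u' = c ∧
        ((compMarks E m u' = 2 ∧ a ≠ b ∧ 1 ≤ markTypeCount B0 v0 v1 v2 E m u' a ∧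
            1 ≤ markTypeCount B0 v0 v1 v2 E m u' b) ∨
          (compMarks E m u' = 3 ∧
            (({a, b} : Set ℕ) = {0, 1} ∨ ({a, b} : Set ℕ) = {0, 2})))} :=
    ⟨u, hu, rfl, hcond⟩
  rw [this] at hne
  exact hne

lemma bpMult_witness {a b : ℕ} (h : 1 ≤ bpMult B0 v0 v1 v2 E m a b) :
    ∃ u, u ≠ v0 ∧
      ((compMarks E m u = 2 ∧ a ≠ b ∧ 1 ≤ markTypeCount B0 v0 v1 v2 E m u a ∧
          1 ≤ markTypeCount B0 v0 v1 v2 E m u b) ∨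
        (compMarks E m u = 3 ∧ (({a, b} : Set ℕ) = {0, 1} ∨ ({a, b} : Set ℕ) = {0, 2}))) := by
  unfold bpMult at h
  have hne := Set.nonempty_of_ncard_ne_zero (Nat.pos_iff_ne_zero.mp h)
  obtain ⟨c, u, hu, -, hcond⟩ := hne
  exact ⟨u, hu, hcond⟩

/-! ### Sides of the edge 02 -/

lemma lhs_iff_side (hB : IsSpanningTree G B) :
    (∃ p : (fromEdgeSet B).Walk v1 v2, p.IsPath ∧ s(v0, v2) ∉ p.edges) ↔
      (fromEdgeSet (B \ {s(v0, v2)})).Reachable v1 v2 := by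
  constructor
  · rintro ⟨p, hp, h02⟩
    refine Walk.reachable (p.transfer _ ?_)
    intro e he
    have h1 := p.edges_subset_edgeSet he
    rw [edgeSet_fromEdgeSet] at h1 ⊢
    refine ⟨⟨h1.1, fun hh => ?_⟩, h1.2⟩
    rw [Set.mem_singleton_iff] at hh
    exact h02 (hh ▸ he)
  · rintro ⟨q0⟩
    obtain ⟨q, hq⟩ := q0.toPath
    have hsub : ∀ e ∈ q.edges, e ∈ (fromEdgeSet B).edgeSet := by
      intro e he
      have h1 := q.edges_subset_edgeSet he
      rw [edgeSet_fromEdgeSet] at h1 ⊢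
      exact ⟨h1.1.1, h1.2⟩
    refine ⟨q.transfer _ hsub, hq.transfer _, ?_⟩
    rw [Walk.edges_transfer]
    intro hmem
    have := q.edges_subset_edgeSet hmem
    rw [edgeSet_fromEdgeSet] at this
    exact this.1.2 rfl

lemma S1_side (hG : IsTriconed G v0 v1 v2) {u : V} (h : S1p G v0 v1 v2 B u) :
    (fromEdgeSet (B \ {s(v0, v2)})).Reachable u v1 := by
  rcases h with rfl | ⟨hu0, hu2, hnadj0, hadj1, hB'⟩
  · exact Reachable.refl _
  · refine Adj.reachable ((fromEdgeSet_adj _).mpr ⟨⟨hB', ?_⟩, hadj1.ne'⟩)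
    rw [Set.mem_singleton_iff, Sym2.eq_iff]
    rintro (⟨h1, -⟩ | ⟨-, h2⟩)
    · exact hu0 h1
    · exact hG.2.1 h2.symm

lemma S2_side (hG : IsTriconed G v0 v1 v2) {u : V} (h : S2p G v0 v1 v2 B u) :
    (fromEdgeSet (B \ {s(v0, v2)})).Reachable u v2 := by
  rcases h with rfl | ⟨hu0, hu1, hnadj0, hnadj1, hadj2, hB'⟩
  · exact Reachable.refl _
  · refine Adj.reachable ((fromEdgeSet_adj _).mpr ⟨⟨hB', ?_⟩, hadj2.ne'⟩)
    rw [Set.mem_singleton_iff, Sym2.eq_iff]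
    rintro (⟨h1, -⟩ | ⟨h1, h2⟩)
    · exact hu0 h1
    · exact hG.2.2.1 h2.symm

/-! ### Cone edge endpoints -/

lemma hub (hG : IsTriconed G v0 v1 v2) (hcone : B0 = coneSet G v0 v1 v2)
    (h01B : s(v0, v1) ∉ B) {f : Sym2 V}
    (hfB : f ∈ B) (hfB0 : f ∈ B0) (hf02 : f ≠ s(v0, v2)) :
    ∃ c h, f = s(c, h) ∧ c ≠ v0 ∧ c ≠ v1 ∧ c ≠ v2 ∧
      ((v0 = h ∧ S0p G v0 v1 v2 B c) ∨ (v1 = h ∧ S1p G v0 v1 v2 B c) ∨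
        (v2 = h ∧ S2p G v0 v1 v2 B c)) := by
  have hfc : f ∈ coneSet G v0 v1 v2 := hcone ▸ hfB0
  obtain ⟨hfG, hpat⟩ := hfc
  rcases hpat with h | ⟨z, rfl, hz0⟩ | ⟨z, rfl, hz0, hz1⟩
  · obtain ⟨z, rfl⟩ := Sym2.mem_iff_exists.mp h
    have hadj : G.Adj v0 z := (SimpleGraph.mem_edgeSet _).mp hfG
    have hz1 : z ≠ v1 := by rintro rfl; exact h01B hfB
    have hz2 : z ≠ v2 := by rintro rfl; exact hf02 rfl
    exact ⟨z, v0, Sym2.eq_swap, hadj.ne', hz1, hz2,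
      Or.inl ⟨rfl, hadj.ne', hz1, hz2, hadj, Sym2.eq_swap ▸ hfB⟩⟩
  · have hadj : G.Adj v1 z := (SimpleGraph.mem_edgeSet _).mp hfG
    have hzv0 : z ≠ v0 := by rintro rfl; exact h01B (Sym2.eq_swap ▸ hfB)
    have hzv2 : z ≠ v2 := by rintro rfl; exact hz0 hG.2.2.2.2.2.1
    exact ⟨z, v1, Sym2.eq_swap, hzv0, hadj.ne', hzv2,
      Or.inr (Or.inl ⟨rfl, Or.inr ⟨hzv0, hzv2, hz0, hadj, Sym2.eq_swap ▸ hfB⟩⟩)⟩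
  · have hadj : G.Adj v2 z := (SimpleGraph.mem_edgeSet _).mp hfG
    have hzv0 : z ≠ v0 := by rintro rfl; exact hf02 Sym2.eq_swap
    have hzv1 : z ≠ v1 := by rintro rfl; exact hz0 hG.2.2.2.2.1
    exact ⟨z, v2, Sym2.eq_swap, hzv0, hzv1, hadj.ne',
      Or.inr (Or.inr ⟨rfl, Or.inr ⟨hzv0, hzv1, hz0, hz1, hadj, Sym2.eq_swap ▸ hfB⟩⟩)⟩

lemma S_marked (hG : IsTriconed G v0 v1 v2) (hcone : B0 = coneSet G v0 v1 v2)
    (hphi : IsPhi1 G v0 v1 v2 B0 B E m) {u : V}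
    (h : S0p G v0 v1 v2 B u ∨ S1p G v0 v1 v2 B u ∨ S2p G v0 v1 v2 B u) : 1 ≤ m u :=
  (marked_iff hG hcone hphi).mpr h

/-! ### The walk lemma: some component contains a type-1 mark and a second mark -/

lemma pw (hG : IsTriconed G v0 v1 v2) (heo : EdgeOrderSpec G v0 v1 v2)
    (hB0 : IsMinSpanningTree G B0) (hB : IsSpanningTree G B)
    (hcone : B0 = coneSet G v0 v1 v2) (hE : E = B \ B0)
    (hphi : IsPhi1 G v0 v1 v2 B0 B E m) (h01B : s(v0, v1) ∉ B)
    (hlhs : ∃ p : (fromEdgeSet B).Walk v1 v2, p.IsPath ∧ s(v0, v2) ∉ p.edges) :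
    ∃ w u', S1p G v0 v1 v2 B w ∧ 1 ≤ m u' ∧ w ≠ u' ∧
      (fromEdgeSet E).Reachable w u' := by
  obtain ⟨p, hp, h02p⟩ := hlhs
  have hmv2 : 1 ≤ m v2 := (hphi.2.2.1 v2).mpr (Or.inr (Or.inl rfl))
  by_cases hr12 : (fromEdgeSet E).Reachable v1 v2
  · exact ⟨v1, v2, Or.inl rfl, hmv2, hG.2.2.2.1, hr12⟩
  obtain ⟨a, b, hra, hfB, hab, hfE, hf02, hasup, hbsup⟩ := wstep p h02p hr12
  have hfB0 : s(a, b) ∈ B0 := by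
    by_contra hn
    exact hfE (by rw [hE]; exact ⟨hfB, hn⟩)
  obtain ⟨c, h', hfeq, hcv0, hcv1, hcv2, hcase⟩ := hub hG hcone h01B hfB hfB0 hf02
  have hmc : 1 ≤ m c := by
    refine S_marked hG hcone hphi ?_
    rcases hcase with ⟨-, hs⟩ | ⟨-, hs⟩ | ⟨-, hs⟩
    · exact Or.inl hs
    · exact Or.inr (Or.inl hs)
    · exact Or.inr (Or.inr hs)
  rw [Sym2.eq_iff] at hfeq
  rcases hfeq with ⟨rfl, rfl⟩ | ⟨rfl, rfl⟩
  · -- a = c : second mark in the component of v1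
    exact ⟨v1, a, Or.inl rfl, hmc, fun h => hcv1 h.symm, hra⟩
  · -- a = h'
    rcases hcase with ⟨rfl, -⟩ | ⟨rfl, hS1b⟩ | ⟨rfl, -⟩
    · exact absurd hra (not_reach_E_v0 hE hG heo hB0 hB hG.2.1.symm)
    · -- a = v1, b = c is a child of v1
      have hS1b' : b ≠ v0 ∧ b ≠ v2 ∧ ¬G.Adj v0 b ∧ G.Adj v1 b ∧ s(b, v1) ∈ B := by
        rcases hS1b with h | h
        · exact absurd h hcv1
        · exact h
      obtain ⟨hbv0', hbv2', hnadj0b, hadj1b, hconeBb⟩ := hS1b'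
      have hv1q : v1 ∉ (p.dropUntil b hbsup).support := by
        have hsupp : p.support =
            (p.takeUntil b hbsup).support ++ (p.dropUntil b hbsup).support.tail := by
          conv_lhs => rw [← p.take_spec hbsup]
          exact Walk.support_append _ _
        have hnd := hp.support_nodup
        rw [hsupp] at hnd
        have hdisj := List.disjoint_of_nodup_append hnd
        have hv1take : v1 ∈ (p.takeUntil b hbsup).support := Walk.start_mem_support _
        intro hmem
        rw [Walk.support_eq_cons] at hmem
        rcases List.mem_cons.mp hmem with h | h
        · exact hcv1 h.symm
        · exact hdisj hv1take h
      set q := p.dropUntil b hbsup with hqdef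
      have hq02 : s(v0, v2) ∉ q.edges := fun hmem =>
        h02p (Walk.edges_dropUntil_subset _ _ hmem)
      by_cases hrb2 : (fromEdgeSet E).Reachable b v2
      · exact ⟨b, v2, hS1b, hmv2, hcv2, hrb2⟩
      obtain ⟨a', b', hra', hf'B, hab', hf'E, hf'02, ha'sup, hb'sup⟩ := wstep q hq02 hrb2
      have hf'B0 : s(a', b') ∈ B0 := by
        by_contra hn
        exact hf'E (by rw [hE]; exact ⟨hf'B, hn⟩)
      obtain ⟨c', h'', hfeq', hc'v0, hc'v1, hc'v2, hcase'⟩ := hub hG hcone h01B hf'B hf'B0 hf'02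
      have hmc' : 1 ≤ m c' := by
        refine S_marked hG hcone hphi ?_
        rcases hcase' with ⟨-, hs⟩ | ⟨-, hs⟩ | ⟨-, hs⟩
        · exact Or.inl hs
        · exact Or.inr (Or.inl hs)
        · exact Or.inr (Or.inr hs)
      rw [Sym2.eq_iff] at hfeq'
      rcases hfeq' with ⟨rfl, rfl⟩ | ⟨rfl, rfl⟩
      · -- a' = c'
        by_cases hab2 : a' = b
        · exfalso
          -- the edge s(b, b') would be a second B0-edge at the leaf b
          rw [hab2] at hf'B0 hf'B
          have hcone' : s(b, b') ∈ coneSet G v0 v1 v2 := hcone ▸ hf'B0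
          obtain ⟨hG', hpat⟩ := hcone'
          have hadjbb' : G.Adj b b' := (SimpleGraph.mem_edgeSet _).mp hG'
          rcases hpat with h | ⟨z, hz, hznadj⟩ | ⟨z, hz, hz0, hz1⟩
          · simp only [Sym2.mem_iff] at h
            rcases h with h | h
            · exact hbv0' h.symm
            · exact hnadj0b (h ▸ hadjbb').symm
          · rw [Sym2.eq_iff] at hz
            rcases hz with ⟨h1, -⟩ | ⟨-, h2⟩
            · exact hadj1b.ne' h1
            · exact hv1q (h2 ▸ hb'sup)
          · rw [Sym2.eq_iff] at hz
            rcases hz with ⟨h1, -⟩ | ⟨h1, h2⟩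
            · exact hbv2' h1
            · exact hz1 (h1 ▸ hadj1b)
        · exact ⟨b, a', hS1b, hmc', fun h => hab2 h.symm, hra'⟩
      · -- a' = h''
        rcases hcase' with ⟨rfl, -⟩ | ⟨rfl, -⟩ | ⟨rfl, -⟩
        · exact absurd hra' (not_reach_E_v0 hE hG heo hB0 hB hbv0')
        · exact absurd ha'sup hv1q
        · exact absurd hra' hrb2
    · exact absurd hra hr12

/-! ### Mark values by class -/

lemma m_S1_eq_one (hG : IsTriconed G v0 v1 v2) (hcone : B0 = coneSet G v0 v1 v2)
    (hphi : IsPhi1 G v0 v1 v2 B0 B E m) {u : V} (h : S1p G v0 v1 v2 B u) : m u = 1 := by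
  have h1 : 1 ≤ m u := S_marked hG hcone hphi (Or.inr (Or.inl h))
  have h2 : m u ≤ 2 := hphi.2.1 u
  by_contra hne
  have hm2 : m u = 2 := by omega
  have hS2 := dbl_S2 hG hcone ((hphi.2.2.2 u).mp hm2)
  have e1 := S1_vType hG hcone h
  have e2 := S2_vType hG hcone hS2
  omega

lemma m_S0_eq_one (hG : IsTriconed G v0 v1 v2) (hcone : B0 = coneSet G v0 v1 v2)
    (hphi : IsPhi1 G v0 v1 v2 B0 B E m) {u : V} (h : S0p G v0 v1 v2 B u) : m u = 1 := by
  have h1 : 1 ≤ m u := S_marked hG hcone hphi (Or.inl h)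
  have h2 : m u ≤ 2 := hphi.2.1 u
  by_contra hne
  have hm2 : m u = 2 := by omega
  have hS2 := dbl_S2 hG hcone ((hphi.2.2.2 u).mp hm2)
  have e1 := S0_vType hG hcone h
  have e2 := S2_vType hG hcone hS2
  omega

lemma type_mark_S0 (hG : IsTriconed G v0 v1 v2) (hcone : B0 = coneSet G v0 v1 v2)
    (hphi : IsPhi1 G v0 v1 v2 B0 B E m) {x : V} (h1 : 1 ≤ m x)
    (ht : vType B0 v0 v1 v2 x = 0) : S0p G v0 v1 v2 B x := by
  rcases (marked_iff hG hcone hphi).mp h1 with h | h | h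
  · exact h
  · have := S1_vType hG hcone h; omega
  · have := S2_vType hG hcone h; omega

lemma type_mark_S1 (hG : IsTriconed G v0 v1 v2) (hcone : B0 = coneSet G v0 v1 v2)
    (hphi : IsPhi1 G v0 v1 v2 B0 B E m) {x : V} (h1 : 1 ≤ m x)
    (ht : vType B0 v0 v1 v2 x = 1) : S1p G v0 v1 v2 B x := by
  rcases (marked_iff hG hcone hphi).mp h1 with h | h | h
  · have := S0_vType hG hcone h; omega
  · exact h
  · have := S2_vType hG hcone h; omega

lemma type_mark_S2 (hG : IsTriconed G v0 v1 v2) (hcone : B0 = coneSet G v0 v1 v2)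
    (hphi : IsPhi1 G v0 v1 v2 B0 B E m) {x : V} (h1 : 1 ≤ m x)
    (ht : vType B0 v0 v1 v2 x = 2) : S2p G v0 v1 v2 B x := by
  rcases (marked_iff hG hcone hphi).mp h1 with h | h | h
  · have := S0_vType hG hcone h; omega
  · have := S1_vType hG hcone h; omega
  · exact h

/-! ### At most two marks per component without a doubly marked vertex -/

lemma class_conflict (hG : IsTriconed G v0 v1 v2) (heo : EdgeOrderSpec G v0 v1 v2)
    (hB0 : IsMinSpanningTree G B0) (hB : IsSpanningTree G B)
    (hcone : B0 = coneSet G v0 v1 v2) (hE : E = B \ B0) (h02B : s(v0, v2) ∈ B)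
    {x y : V} (hne : x ≠ y) (hr : (fromEdgeSet E).Reachable x y)
    (hx : S0p G v0 v1 v2 B x ∨ S1p G v0 v1 v2 B x ∨ S2p G v0 v1 v2 B x)
    (hy : S0p G v0 v1 v2 B y ∨ S1p G v0 v1 v2 B y ∨ S2p G v0 v1 v2 B y) :
    S1p G v0 v1 v2 B x ∨ S1p G v0 v1 v2 B y := by
  rcases hx with hx | hx | hx <;> rcases hy with hy | hy | hy
  · exact (no_two_S0 hG hcone hB hE hx hy hne hr).elim
  · exact Or.inr hy
  · exact (no_S0_S2 hG heo hB0 hB hE h02B hx hy hr).elim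
  · exact Or.inl hx
  · exact Or.inl hx
  · exact Or.inl hx
  · exact (no_S0_S2 hG heo hB0 hB hE h02B hy hx hr.symm).elim
  · exact Or.inr hy
  · exact (no_two_S2 hG hcone hB hE hx hy hne hr).elim

lemma three_marked (hle : ∀ v, m v ≤ 1) {u : V} (h3 : compMarks E m u = 3) :
    ∃ x y z : V, x ≠ y ∧ x ≠ z ∧ y ≠ z ∧
      (fromEdgeSet E).Reachable u x ∧ (fromEdgeSet E).Reachable u y ∧
      (fromEdgeSet E).Reachable u z ∧ 1 ≤ m x ∧ 1 ≤ m y ∧ 1 ≤ m z := by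
  classical
  have hsum : compMarks E m u =
      ∑ x ∈ Finset.univ.filter (fun x => (fromEdgeSet E).Reachable u x ∧ 1 ≤ m x), m x := by
    unfold compMarks
    rw [Finset.sum_filter]
    refine Finset.sum_congr rfl fun x _ => ?_
    by_cases hr : (fromEdgeSet E).Reachable u x
    · by_cases hm : 1 ≤ m x
      · rw [if_pos hr, if_pos ⟨hr, hm⟩]
      · rw [if_pos hr, if_neg (fun hc => hm hc.2)]
        omega
    · rw [if_neg hr, if_neg (fun hc => hr hc.1)]
  have hones : ∑ x ∈ Finset.univ.filter (fun x => (fromEdgeSet E).Reachable u x ∧ 1 ≤ m x), m x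
      = (Finset.univ.filter fun x => (fromEdgeSet E).Reachable u x ∧ 1 ≤ m x).card := by
    rw [Finset.card_eq_sum_ones]
    refine Finset.sum_congr rfl fun x hx => ?_
    have h1 := (Finset.mem_filter.mp hx).2.2
    have h2 := hle x
    omega
  have hcard : (Finset.univ.filter fun x => (fromEdgeSet E).Reachable u x ∧ 1 ≤ m x).card = 3 := by
    omega
  obtain ⟨x, y, z, hxy, hxz, hyz, hset⟩ := Finset.card_eq_three.mp hcard
  have hmemx : x ∈ Finset.univ.filter (fun x => (fromEdgeSet E).Reachable u x ∧ 1 ≤ m x) := by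
    rw [hset]; simp
  have hmemy : y ∈ Finset.univ.filter (fun x => (fromEdgeSet E).Reachable u x ∧ 1 ≤ m x) := by
    rw [hset]; simp
  have hmemz : z ∈ Finset.univ.filter (fun x => (fromEdgeSet E).Reachable u x ∧ 1 ≤ m x) := by
    rw [hset]; simp
  have hx := (Finset.mem_filter.mp hmemx).2
  have hy := (Finset.mem_filter.mp hmemy).2
  have hz := (Finset.mem_filter.mp hmemz).2
  exact ⟨x, y, z, hxy, hxz, hyz, hx.1, hy.1, hz.1, hx.2, hy.2, hz.2⟩

lemma no_three (hG : IsTriconed G v0 v1 v2) (heo : EdgeOrderSpec G v0 v1 v2)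
    (hB0 : IsMinSpanningTree G B0) (hB : IsSpanningTree G B)
    (hcone : B0 = coneSet G v0 v1 v2) (hE : E = B \ B0)
    (hphi : IsPhi1 G v0 v1 v2 B0 B E m) (h02B : s(v0, v2) ∈ B) {x y z : V}
    (hxy : x ≠ y) (hxz : x ≠ z) (hyz : y ≠ z)
    (rxy : (fromEdgeSet E).Reachable x y) (rxz : (fromEdgeSet E).Reachable x z)
    (ryz : (fromEdgeSet E).Reachable y z)
    (hmx : 1 ≤ m x) (hmy : 1 ≤ m y) (hmz : 1 ≤ m z) : False := by
  have cx := (marked_iff hG hcone hphi).mp hmx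
  have cy := (marked_iff hG hcone hphi).mp hmy
  have cz := (marked_iff hG hcone hphi).mp hmz
  have p1 := class_conflict hG heo hB0 hB hcone hE h02B hxy rxy cx cy
  have p2 := class_conflict hG heo hB0 hB hcone hE h02B hxz rxz cx cz
  have p3 := class_conflict hG heo hB0 hB hcone hE h02B hyz ryz cy cz
  rcases p1 with h | h
  · rcases p3 with h' | h'
    · exact no_two_S1 hG hcone hB hE h h' hxy rxy
    · exact no_two_S1 hG hcone hB hE h h' hxz rxz
  · rcases p2 with h' | h'
    · exact no_two_S1 hG hcone hB hE h' h hxy rxy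
    · exact no_two_S1 hG hcone hB hE h h' hyz ryz

/-! ### The main backward direction -/

lemma claimA (hG : IsTriconed G v0 v1 v2) (heo : EdgeOrderSpec G v0 v1 v2)
    (hB0 : IsMinSpanningTree G B0) (hB : IsSpanningTree G B)
    (hcone : B0 = coneSet G v0 v1 v2) (hE : E = B \ B0)
    (hphi : IsPhi1 G v0 v1 v2 B0 B E m)
    (h02B : s(v0, v2) ∈ B)
    (hnl : ¬∃ p : (fromEdgeSet B).Walk v1 v2, p.IsPath ∧ s(v0, v2) ∉ p.edges) :
    ¬bpConnected B0 v0 v1 v2 E m 1 2 := by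
  have hnodbl : ∀ v, m v ≤ 1 := by
    intro v
    by_contra h
    push_neg at h
    have hv2 : m v = 2 := le_antisymm (hphi.2.1 v) h
    exact hnl (lhs_of_dbl hphi hv2)
  have hside : ∀ x y, S1p G v0 v1 v2 B x → S2p G v0 v1 v2 B y →
      (fromEdgeSet E).Reachable x y → False := by
    intro x y h1 h2 hr
    apply hnl
    rw [lhs_iff_side hB]
    have h02B0 : s(v0, v2) ∈ B0 := v0_edge_mem_B0 hG heo hB0 hG.2.2.2.2.2.1
    exact (S1_side hG h1).symm.trans
      ((hr.mono (fromEdgeSet_mono (E_avoid hE h02B0))).trans (S2_side hG h2))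
  intro hbp
  unfold bpConnected at hbp
  rcases hbp with h12 | hmult | ⟨c, hcmem, hc1, hc2, hca, hcb⟩
  · omega
  · obtain ⟨u, hu, hcond⟩ := bpMult_witness hmult
    rcases hcond with ⟨-, -, hcA, hcB⟩ | ⟨h3, habs⟩
    · obtain ⟨x1, hrx1, hx1⟩ := markTypeCount_witness hcA
      obtain ⟨x2, hrx2, hx2⟩ := markTypeCount_witness hcB
      have hx1' : 1 ≤ m x1 ∧ vType B0 v0 v1 v2 x1 = 1 := by
        rcases hx1 with h | h
        · exact h
        · omega
      have hx2' : 1 ≤ m x2 ∧ vType B0 v0 v1 v2 x2 = 2 := by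
        rcases hx2 with h | h
        · exact h
        · omega
      exact hside x1 x2 (type_mark_S1 hG hcone hphi hx1'.1 hx1'.2)
        (type_mark_S2 hG hcone hphi hx2'.1 hx2'.2) (hrx1.symm.trans hrx2)
    · rcases habs with h | h
      · have h2 : (2 : ℕ) ∈ ({0, 1} : Set ℕ) := by
          rw [← h]; simp
        simp at h2
      · have h1 : (1 : ℕ) ∈ ({0, 2} : Set ℕ) := by
          rw [← h]; simp
        simp at h1
  · have hc0 : c = 0 := by
      simp only [Set.mem_insert_iff, Set.mem_singleton_iff] at hcmem
      rcases hcmem with h | h | h <;> omega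
    subst hc0
    obtain ⟨u, hu, hcond⟩ := bpMult_witness hcb
    rcases hcond with ⟨-, -, hc0m, hc2m⟩ | ⟨h3, -⟩
    · obtain ⟨y0, hry0, hy0⟩ := markTypeCount_witness hc0m
      obtain ⟨y2, hry2, hy2⟩ := markTypeCount_witness hc2m
      have hy0' : 1 ≤ m y0 ∧ vType B0 v0 v1 v2 y0 = 0 := by
        rcases hy0 with h | h
        · exact h
        · have := hnodbl y0
          omega
      have hy2' : 1 ≤ m y2 ∧ vType B0 v0 v1 v2 y2 = 2 := by
        rcases hy2 with h | h
        · exact h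
        · omega
      exact no_S0_S2 hG heo hB0 hB hE h02B (type_mark_S0 hG hcone hphi hy0'.1 hy0'.2)
        (type_mark_S2 hG hcone hphi hy2'.1 hy2'.2) (hry0.symm.trans hry2)
    · obtain ⟨x, y, z, hxy, hxz, hyz, hrx, hry, hrz, hmx, hmy, hmz⟩ := three_marked hnodbl h3
      exact no_three hG heo hB0 hB hcone hE hphi h02B hxy hxz hyz
        (hrx.symm.trans hry) (hrx.symm.trans hrz) (hry.symm.trans hrz) hmx hmy hmz


end Stmt9Aux

section Statements

variable (G : SimpleGraph V) (v0 v1 v2 : V) (B0 : Set (Sym2 V))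

theorem statement9
    (hG : IsTriconed G v0 v1 v2)
    (hvo : VertexOrderSpec G v0 v1 v2)
    (heo : EdgeOrderSpec G v0 v1 v2)
    (hnc : NoColoops G)
    (hB0 : IsMinSpanningTree G B0)
    (B : Set (Sym2 V)) (hB : IsSpanningTree G B)
    (h01 : s(v0, v1) ∉ B) (h02 : s(v0, v2) ∈ B)
    (E : Set (Sym2 V)) (m : V → ℕ)
    (hphi : IsPhi1 G v0 v1 v2 B0 B E m) :
    (∃ p : (SimpleGraph.fromEdgeSet B).Walk v1 v2, p.IsPath ∧ s(v0, v2) ∉ p.edges) ↔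
      bpConnected B0 v0 v1 v2 E m 1 2 := by
  classical
  have hcone : B0 = Stmt9Aux.coneSet G v0 v1 v2 := Stmt9Aux.B0_eq hG heo hB0
  have hE : E = B \ B0 := Stmt9Aux.E_eq hG heo hB0 hB hphi
  constructor
  · intro hlhs
    obtain ⟨x, hx2⟩ := Stmt9Aux.exists_dbl_of_lhs hG heo hB0 hB h02 hphi hlhs
    have hS2x : Stmt9Aux.S2p G v0 v1 v2 B x :=
      Stmt9Aux.dbl_S2 hG hcone ((hphi.2.2.2 x).mp hx2)
    have hmx : 1 ≤ m x := by omega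
    have hxv0 : x ≠ v0 := Stmt9Aux.S2p_ne_v0 hG hS2x
    have hvtx : vType B0 v0 v1 v2 x = 2 := Stmt9Aux.S2_vType hG hcone hS2x
    unfold bpConnected
    by_cases hS1x : ∃ y, (SimpleGraph.fromEdgeSet E).Reachable x y ∧ 1 ≤ m y ∧
        Stmt9Aux.S1p G v0 v1 v2 B y
    · obtain ⟨y, hrxy, hmy, hS1y⟩ := hS1x
      have hvty : vType B0 v0 v1 v2 y = 1 := Stmt9Aux.S1_vType hG hcone hS1y
      have hyx : x ≠ y := by
        intro h
        rw [h] at hvtx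
        omega
      have hmy1 : m y = 1 := Stmt9Aux.m_S1_eq_one hG hcone hphi hS1y
      have hoth : ∀ w, (SimpleGraph.fromEdgeSet E).Reachable x w → 1 ≤ m w →
          w = x ∨ w = y := by
        intro w hrw hmw
        rcases (Stmt9Aux.marked_iff hG hcone hphi).mp hmw with g0 | g1 | g2
        · exact (Stmt9Aux.no_S0_S2 hG heo hB0 hB hE h02 g0 hS2x hrw.symm).elim
        · by_contra hc
          push_neg at hc
          exact Stmt9Aux.no_two_S1 hG hcone hB hE g1 hS1y hc.2 (hrw.symm.trans hrxy)
        · by_contra hc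
          push_neg at hc
          exact Stmt9Aux.no_two_S2 hG hcone hB hE g2 hS2x (fun hh => hc.1 hh) hrw.symm
      have hcomp : compMarks E m x = 3 := by
        rw [Stmt9Aux.compMarks_eq_pair hyx (SimpleGraph.Reachable.refl _) hrxy hoth, hx2, hmy1]
      right; right
      refine ⟨0, by simp, by omega, by omega, ?_, ?_⟩
      · exact Stmt9Aux.bpMult_ge_one hxv0 (Or.inr ⟨hcomp, Or.inl (Set.pair_comm 1 0)⟩)
      · exact Stmt9Aux.bpMult_ge_one hxv0 (Or.inr ⟨hcomp, Or.inr rfl⟩)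
    · have hothx : ∀ w, (SimpleGraph.fromEdgeSet E).Reachable x w → 1 ≤ m w → w = x := by
        intro w hrw hmw
        rcases (Stmt9Aux.marked_iff hG hcone hphi).mp hmw with g0 | g1 | g2
        · exact (Stmt9Aux.no_S0_S2 hG heo hB0 hB hE h02 g0 hS2x hrw.symm).elim
        · exact absurd ⟨w, hrw, hmw, g1⟩ hS1x
        · by_contra hne
          exact Stmt9Aux.no_two_S2 hG hcone hB hE g2 hS2x hne hrw.symm
      have hcompx : compMarks E m x = 2 := by
        rw [Stmt9Aux.compMarks_eq_single (SimpleGraph.Reachable.refl _) hothx, hx2]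
      have hbp02 : 1 ≤ bpMult B0 v0 v1 v2 E m 0 2 :=
        Stmt9Aux.bpMult_ge_one hxv0 (Or.inl ⟨hcompx, by omega,
          Stmt9Aux.markTypeCount_ge_one (SimpleGraph.Reachable.refl _) (Or.inr ⟨hx2, rfl⟩),
          Stmt9Aux.markTypeCount_ge_one (SimpleGraph.Reachable.refl _) (Or.inl ⟨hmx, hvtx⟩)⟩)
      obtain ⟨w, u', hS1w, hmu', hwne, hrwu⟩ :=
        Stmt9Aux.pw hG heo hB0 hB hcone hE hphi h01 hlhs
      have hmw1 : m w = 1 := Stmt9Aux.m_S1_eq_one hG hcone hphi hS1w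
      have hwv0 : w ≠ v0 := Stmt9Aux.S1p_ne_v0 hG hS1w
      have hvtw : vType B0 v0 v1 v2 w = 1 := Stmt9Aux.S1_vType hG hcone hS1w
      rcases (Stmt9Aux.marked_iff hG hcone hphi).mp hmu' with g0 | g1 | g2
      · have hoth : ∀ t, (SimpleGraph.fromEdgeSet E).Reachable w t → 1 ≤ m t →
            t = w ∨ t = u' := by
          intro t hrt hmt
          rcases (Stmt9Aux.marked_iff hG hcone hphi).mp hmt with f0 | f1 | f2
          · by_contra hc
            push_neg at hc
            exact Stmt9Aux.no_two_S0 hG hcone hB hE f0 g0 hc.2 (hrt.symm.trans hrwu)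
          · by_contra hc
            push_neg at hc
            exact Stmt9Aux.no_two_S1 hG hcone hB hE f1 hS1w hc.1 hrt.symm
          · exact (Stmt9Aux.no_S0_S2 hG heo hB0 hB hE h02 g0 f2
              (hrwu.symm.trans hrt)).elim
        have hmu1 : m u' = 1 := Stmt9Aux.m_S0_eq_one hG hcone hphi g0
        have hcompw : compMarks E m w = 2 := by
          rw [Stmt9Aux.compMarks_eq_pair hwne (SimpleGraph.Reachable.refl _) hrwu hoth,
            hmw1, hmu1]
        right; right
        refine ⟨0, by simp, by omega, by omega, ?_, hbp02⟩
        exact Stmt9Aux.bpMult_ge_one hwv0 (Or.inl ⟨hcompw, by omega,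
          Stmt9Aux.markTypeCount_ge_one (SimpleGraph.Reachable.refl _)
            (Or.inl ⟨by omega, hvtw⟩),
          Stmt9Aux.markTypeCount_ge_one hrwu
            (Or.inl ⟨hmu', Stmt9Aux.S0_vType hG hcone g0⟩)⟩)
      · exact (Stmt9Aux.no_two_S1 hG hcone hB hE hS1w g1 hwne hrwu).elim
      · have hoth : ∀ t, (SimpleGraph.fromEdgeSet E).Reachable w t → 1 ≤ m t →
            t = w ∨ t = u' := by
          intro t hrt hmt
          rcases (Stmt9Aux.marked_iff hG hcone hphi).mp hmt with f0 | f1 | f2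
          · exact (Stmt9Aux.no_S0_S2 hG heo hB0 hB hE h02 f0 g2
              (hrt.symm.trans hrwu)).elim
          · by_contra hc
            push_neg at hc
            exact Stmt9Aux.no_two_S1 hG hcone hB hE f1 hS1w hc.1 hrt.symm
          · by_contra hc
            push_neg at hc
            exact Stmt9Aux.no_two_S2 hG hcone hB hE f2 g2 hc.2 (hrt.symm.trans hrwu)
        have hcompw : compMarks E m w = 1 + m u' := by
          rw [Stmt9Aux.compMarks_eq_pair hwne (SimpleGraph.Reachable.refl _) hrwu hoth, hmw1]
        by_cases hmu2 : m u' = 2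
        · right; right
          refine ⟨0, by simp, by omega, by omega, ?_, hbp02⟩
          exact Stmt9Aux.bpMult_ge_one hwv0 (Or.inr ⟨by omega, Or.inl (Set.pair_comm 1 0)⟩)
        · have hmu1 : m u' = 1 := by
            have := hphi.2.1 u'
            omega
          right; left
          exact Stmt9Aux.bpMult_ge_one hwv0 (Or.inl ⟨by omega, by omega,
            Stmt9Aux.markTypeCount_ge_one (SimpleGraph.Reachable.refl _)
              (Or.inl ⟨by omega, hvtw⟩),
            Stmt9Aux.markTypeCount_ge_one hrwu
              (Or.inl ⟨hmu', Stmt9Aux.S2_vType hG hcone g2⟩)⟩)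
  · intro hbp
    by_contra hnl
    exact Stmt9Aux.claimA hG heo hB0 hB hcone hE hphi h02 hnl hbp

end Statements
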